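/- arXiv:2102.06127 — 6 statements merged into one kernel-verified Lean document; each statement's English description precedes it below -/
import Mathlib

section
/- The natural density of the set of square-free positive integers is 6/π². -/
open Filter Finset ArithmeticFunction
open scoped ArithmeticFunction.Moebius ArithmeticFunction.zeta

lemma moebius_norm_le (d : ℕ) : ‖(μ d : ℝ)‖ ≤ 1 := by
  have := abs_moebius_le_one (n := d)
  rw [Real.norm_eq_abs, ← Int.cast_abs]
  exact_mod_cast this

lemma summable_moebius_div_sq : Summable (fun d : ℕ => (μ d : ℝ) / (d:ℝ)^2) := by
  apply Summable.of_norm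
  apply Summable.of_nonneg_of_le (fun d => norm_nonneg _) (fun d => ?_)
    ((Real.summable_one_div_nat_pow (p := 2)).mpr one_lt_two)
  rw [norm_div, norm_pow, Real.norm_natCast]
  rcases eq_or_ne d 0 with rfl | hd
  · simp
  · gcongr
    exact moebius_norm_le d

lemma tsum_moebius_div_sq : (∑' d : ℕ, (μ d : ℝ) / (d:ℝ)^2) = 6 / Real.pi ^ 2 := by
  have h2 : (1:ℝ) < (2:ℂ).re := by norm_num
  have hz := LSeries_zeta_mul_Lseries_moebius h2
  have hzeta : riemannZeta 2 = (Real.pi : ℂ) ^ 2 / 6 := riemannZeta_two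
  have hL : LSeries (fun n => (μ n : ℂ)) 2 = 6 / (Real.pi : ℂ) ^ 2 := by
    rw [LSeries_zeta_eq_riemannZeta h2, hzeta] at hz
    have hpi : (Real.pi : ℂ) ^ 2 ≠ 0 := by
      simpa using Complex.ofReal_ne_zero.mpr Real.pi_ne_zero
    field_simp at hz ⊢
    linear_combination hz
  have hco : (((∑' d : ℕ, (μ d : ℝ) / (d:ℝ)^2) : ℝ) : ℂ)
      = LSeries (fun n => (μ n : ℂ)) 2 := by
    rw [Complex.ofReal_tsum]
    apply tsum_congr fun d => ?_
    rcases eq_or_ne d 0 with rfl | hd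
    · simp [LSeries.term_zero]
    · rw [LSeries.term_of_ne_zero hd]
      push_cast
      rw [show ((2:ℂ)) = ((2:ℕ):ℂ) by norm_num, Complex.cpow_natCast]
  rw [hL] at hco
  have : ((6 / Real.pi ^ 2 : ℝ) : ℂ) = 6 / (Real.pi:ℂ)^2 := by push_cast; ring
  exact_mod_cast hco.trans this.symm

lemma sq_dvd_iff {d n : ℕ} (hn : n ≠ 0) (hd : Squarefree d) :
    d^2 ∣ n ↔ ∀ p ∈ d.primeFactors, p^2 ∣ n := by
  constructor
  · exact fun h p hp => (pow_dvd_pow_of_dvd (Nat.dvd_of_mem_primeFactors hp) 2).trans h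
  · intro h
    rw [← Nat.factorization_le_iff_dvd (pow_ne_zero 2 hd.ne_zero) hn]
    intro p
    rw [Nat.factorization_pow]
    simp only [Finsupp.smul_apply, smul_eq_mul]
    by_cases hp : p ∈ d.primeFactors
    · have hp' : Nat.Prime p := Nat.prime_of_mem_primeFactors hp
      have h1 : d.factorization p = 1 :=
        (hd.natFactorization_le_one p).antisymm
          (Nat.Prime.factorization_pos_of_dvd hp' hd.ne_zero (Nat.dvd_of_mem_primeFactors hp))
      rw [h1, mul_one, ← Nat.Prime.pow_dvd_iff_le_factorization hp' hn]
      exact h p hp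
    · by_cases hpp : Nat.Prime p
      · rw [Nat.factorization_eq_zero_of_not_dvd
          (fun hpd => hp (Nat.mem_primeFactors.mpr ⟨hpp, hpd, hd.ne_zero⟩)), mul_zero]
        exact Nat.zero_le _
      · rw [Nat.factorization_eq_zero_of_not_prime d hpp, mul_zero]
        exact Nat.zero_le _

lemma moebius_count {n N : ℕ} (h1 : 1 ≤ n) (h2 : n ≤ N) :
    (if Squarefree n then (1:ℤ) else 0)
      = ∑ d ∈ Icc 1 N, μ d * (if d^2 ∣ n then 1 else 0) := by
  have hn0 : n ≠ 0 := Nat.one_le_iff_ne_zero.mp h1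
  set t := n.primeFactors.filter (fun p => p^2 ∣ n) with ht
  set r := ∏ p ∈ t, p with hr
  have htmem : ∀ p, p ∈ t ↔ p.Prime ∧ p^2 ∣ n := by
    intro p
    rw [ht, Finset.mem_filter, Nat.mem_primeFactors]
    constructor
    · rintro ⟨⟨hp, _, _⟩, h2⟩; exact ⟨hp, h2⟩
    · rintro ⟨hp, h2⟩
      exact ⟨⟨hp, dvd_trans (dvd_pow_self p two_ne_zero) h2, hn0⟩, h2⟩
  have hr0 : r ≠ 0 := by
    rw [hr]
    exact Finset.prod_ne_zero_iff.mpr fun p hp => ((htmem p).mp hp).1.pos.ne'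
  have hset : ((Icc 1 N).filter (fun d => d^2 ∣ n)).filter Squarefree
      = r.divisors.filter Squarefree := by
    ext d
    simp only [Finset.mem_filter, Finset.mem_Icc, Nat.mem_divisors]
    constructor
    · rintro ⟨⟨⟨hd1, hdN⟩, hdvd⟩, hsf⟩
      refine ⟨⟨?_, hr0⟩, hsf⟩
      rw [← Nat.prod_primeFactors_of_squarefree hsf, hr]
      apply Finset.prod_dvd_prod_of_subset
      intro p hp
      rw [htmem]
      have hpd : p ∣ d := Nat.dvd_of_mem_primeFactors hp
      exact ⟨Nat.prime_of_mem_primeFactors hp,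
        (pow_dvd_pow_of_dvd hpd 2).trans hdvd⟩
    · rintro ⟨⟨hdr, -⟩, hsf⟩
      have hdvd : d^2 ∣ n := by
        rw [sq_dvd_iff hn0 hsf]
        intro p hp
        have hp' : Nat.Prime p := Nat.prime_of_mem_primeFactors hp
        have : p ∣ r := (Nat.dvd_of_mem_primeFactors hp).trans hdr
        obtain ⟨q, hq, hpq⟩ := hp'.prime.exists_mem_finset_dvd this
        have hq' := (htmem q).mp hq
        rw [(Nat.prime_dvd_prime_iff_eq hp' hq'.1).mp hpq]
        exact hq'.2
      have hd0 : d ≠ 0 := fun h => hr0 (by simpa [h] using hdr)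
      refine ⟨⟨⟨Nat.one_le_iff_ne_zero.mpr hd0, ?_⟩, hdvd⟩, hsf⟩
      calc d ≤ d^2 := Nat.le_self_pow two_ne_zero d
        _ ≤ n := Nat.le_of_dvd (Nat.pos_of_ne_zero hn0) hdvd
        _ ≤ N := h2
  have e1 : ∑ d ∈ Icc 1 N, μ d * (if d^2 ∣ n then (1:ℤ) else 0)
      = ∑ d ∈ (Icc 1 N).filter (fun d => d^2 ∣ n), μ d := by
    rw [Finset.sum_filter]
    exact Finset.sum_congr rfl fun d _ => by split <;> simp
  have e2 : ∑ d ∈ (Icc 1 N).filter (fun d => d^2 ∣ n), μ d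
      = ∑ d ∈ ((Icc 1 N).filter (fun d => d^2 ∣ n)).filter Squarefree, μ d :=
    (Finset.sum_filter_of_ne (fun d _ hne => moebius_ne_zero_iff_squarefree.mp hne)).symm
  have e4 : ∑ d ∈ r.divisors.filter Squarefree, μ d = ∑ d ∈ r.divisors, μ d :=
    Finset.sum_filter_of_ne (fun d _ hne => moebius_ne_zero_iff_squarefree.mp hne)
  have e5 : ∑ d ∈ r.divisors, μ d = if r = 1 then 1 else 0 := by
    have h : (μ * (ζ : ArithmeticFunction ℤ)) r = (1 : ArithmeticFunction ℤ) r := by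
      rw [moebius_mul_coe_zeta]
    rw [coe_mul_zeta_apply] at h
    rw [h, one_apply]
  have e6 : (if r = 1 then (1:ℤ) else 0) = if Squarefree n then 1 else 0 := by
    congr 1
    simp only [eq_iff_iff]
    constructor
    · intro hrone
      rw [Nat.squarefree_iff_prime_squarefree]
      intro p hp hdvd
      have hpt : p ∈ t := (htmem p).mpr ⟨hp, by rwa [pow_two]⟩
      have : p ∣ r := Finset.dvd_prod_of_mem _ hpt
      rw [hrone] at this
      exact hp.one_lt.ne' (Nat.eq_one_of_dvd_one this)
    · intro hsf
      have : t = ∅ := by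
        rw [Finset.eq_empty_iff_forall_notMem]
        intro p hp
        have := (htmem p).mp hp
        exact (Nat.squarefree_iff_prime_squarefree.mp hsf p this.1) (by rw [← pow_two]; exact this.2)
      rw [hr, this, Finset.prod_empty]
  rw [e1, e2, hset, e4, e5, e6]

lemma count_eq (N : ℕ) :
    ((((Icc 1 N)).filter (fun n => Squarefree n)).card : ℤ)
      = ∑ d ∈ Icc 1 N, μ d * ((N / d^2 : ℕ) : ℤ) := by
  have hIoc : Icc 1 N = Ioc 0 N := Finset.Icc_add_one_left_eq_Ioc 0 N
  calc (((Icc 1 N).filter (fun n => Squarefree n)).card : ℤ)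
      = ∑ n ∈ Icc 1 N, (if Squarefree n then (1:ℤ) else 0) := by
        rw [Finset.sum_boole]
    _ = ∑ n ∈ Icc 1 N, ∑ d ∈ Icc 1 N, μ d * (if d^2 ∣ n then 1 else 0) :=
        Finset.sum_congr rfl fun n hn =>
          moebius_count (Finset.mem_Icc.mp hn).1 (Finset.mem_Icc.mp hn).2
    _ = ∑ d ∈ Icc 1 N, ∑ n ∈ Icc 1 N, μ d * (if d^2 ∣ n then 1 else 0) :=
        Finset.sum_comm
    _ = ∑ d ∈ Icc 1 N, μ d * ((N / d^2 : ℕ) : ℤ) := by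
        refine Finset.sum_congr rfl fun d _ => ?_
        rw [← Finset.mul_sum, Finset.sum_boole, hIoc,
          Nat.Ioc_filter_dvd_card_eq_div N (d^2)]

noncomputable def F (N d : ℕ) : ℝ := (μ d : ℝ) * ((N / d^2 : ℕ) : ℝ) / N

lemma card_div_eq_tsum (N : ℕ) :
    (((Icc 1 N).filter (fun n => Squarefree n)).card : ℝ) / N = ∑' d, F N d := by
  rw [tsum_eq_sum (s := Icc 1 N) (f := F N) ?_]
  · have := count_eq N
    have h2 : ((((Icc 1 N).filter (fun n => Squarefree n)).card : ℤ) : ℝ)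
        = ((∑ d ∈ Icc 1 N, μ d * ((N / d^2 : ℕ) : ℤ) : ℤ) : ℝ) := by exact_mod_cast this
    push_cast at h2
    rw [h2, Finset.sum_div]
    exact Finset.sum_congr rfl fun d _ => rfl
  · intro d hd
    rw [Finset.mem_Icc, not_and_or] at hd
    rcases hd with hd | hd
    · have : d = 0 := by omega
      simp [F, this]
    · have hNd : N < d^2 := by
        push_neg at hd
        calc N < d := hd
          _ ≤ d^2 := Nat.le_self_pow two_ne_zero d
      simp [F, Nat.div_eq_of_lt hNd]

lemma F_tendsto (d : ℕ) :
    Tendsto (fun N => F N d) atTop (nhds ((μ d : ℝ) / (d:ℝ)^2)) := by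
  rcases eq_or_ne d 0 with rfl | hd
  · simp only [F, ArithmeticFunction.map_zero]
    simpa using tendsto_const_nhds
  have hd2 : (0:ℝ) < (d:ℝ)^2 := by positivity
  have key : Tendsto (fun N : ℕ => ((N / d^2 : ℕ) : ℝ) / N) atTop (nhds (1 / (d:ℝ)^2)) := by
    apply tendsto_of_tendsto_of_tendsto_of_le_of_le' (g := fun N : ℕ => 1/(d:ℝ)^2 - 1/N)
      (h := fun _ : ℕ => 1/(d:ℝ)^2)
    · have : Tendsto (fun N : ℕ => 1/(N:ℝ)) atTop (nhds 0) := tendsto_one_div_atTop_nhds_zero_nat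
      simpa using tendsto_const_nhds.sub this
    · exact tendsto_const_nhds
    · filter_upwards [eventually_ge_atTop 1] with N hN
      have hN0 : (0:ℝ) < N := by exact_mod_cast hN
      rw [sub_le_iff_le_add, ← add_div, le_div_iff₀ hN0, div_mul_eq_mul_div,
        div_le_iff₀ hd2]
      have hnat : N < (N / d^2 + 1) * d^2 :=
        (Nat.div_lt_iff_lt_mul (Nat.pos_of_ne_zero (pow_ne_zero 2 hd))).mp (Nat.lt_succ_self _)
      have : (N:ℝ) < ((N / d^2 : ℕ) + 1) * (d^2 : ℕ) := by exact_mod_cast hnat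
      push_cast at this
      nlinarith
    · filter_upwards [eventually_ge_atTop 1] with N hN
      have hN0 : (0:ℝ) < N := by exact_mod_cast hN
      have h1 : ((N / d^2 : ℕ) : ℝ) ≤ (N:ℝ) / ((d:ℝ)^2) := by
        have := Nat.cast_div_le (m := N) (n := d^2) (α := ℝ)
        push_cast at this
        exact this
      have h2 : (N:ℝ)/((d:ℝ)^2)*((d:ℝ)^2) = N := div_mul_cancel₀ _ hd2.ne'
      rw [div_le_div_iff₀ hN0 hd2]
      nlinarith
  have := key.const_mul (μ d : ℝ)
  simpa [F, mul_one_div, div_div, mul_div_assoc, ← div_eq_mul_inv] using this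

theorem squarefree_density :
    Tendsto (fun N : ℕ =>
      (((Finset.Icc 1 N).filter (fun n => Squarefree n)).card : ℝ) / N)
      atTop (nhds (6 / Real.pi ^ 2)) := by
  have h := tendsto_tsum_of_dominated_convergence
    (f := F) (g := fun d => (μ d : ℝ) / (d:ℝ)^2) (bound := fun d => 1 / (d:ℝ)^2)
    ((Real.summable_one_div_nat_pow (p := 2)).mpr one_lt_two)
    F_tendsto ?_
  · rw [tsum_moebius_div_sq] at h
    convert h using 2 with N
    exact card_div_eq_tsum N
  · apply Eventually.of_forall
    intro N d
    rcases eq_or_ne d 0 with rfl | hd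
    · simp [F]
    rcases Nat.eq_zero_or_pos N with rfl | hN
    · simp [F]
    have hN0 : (0:ℝ) < N := by exact_mod_cast hN
    have hd2 : (0:ℝ) < (d:ℝ)^2 := by positivity
    rw [F, norm_div, norm_mul, Real.norm_natCast]
    have hq : ((N / d^2 : ℕ) : ℝ) ≤ (N:ℝ) / ((d:ℝ)^2) := by
      have := Nat.cast_div_le (m := N) (n := d^2) (α := ℝ)
      push_cast at this
      exact this
    have h1 : ‖(μ d : ℝ)‖ * ((N / d^2 : ℕ) : ℝ) ≤ 1 * ((N:ℝ)/((d:ℝ)^2)) := by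
      apply mul_le_mul (moebius_norm_le d) hq (by positivity) zero_le_one
    have h2 : (N:ℝ)/((d:ℝ)^2)*((d:ℝ)^2) = N := div_mul_cancel₀ _ hd2.ne'
    rw [Real.norm_natCast, div_le_div_iff₀ hN0 hd2]
    nlinarith
end

section
/- For a prime p, the natural density of the set of square-free positive integers not divisible by p is (6/π²)·p/(p+1). -/
open Filter Finset

section Aux
open ArithmeticFunction Topology
open scoped ArithmeticFunction.Moebius

lemma sf_prod_primes {s : Finset ℕ} (hs : ∀ q ∈ s, q.Prime) : Squarefree (∏ q ∈ s, q) := by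
  classical
  induction s using Finset.induction_on with
  | empty => simpa using squarefree_one
  | @insert a s ha ih =>
    rw [Finset.prod_insert ha, Nat.squarefree_mul_iff]
    have hap := hs a (Finset.mem_insert_self a s)
    refine ⟨?_, hap.squarefree, ih fun q hqs => hs q (Finset.mem_insert_of_mem hqs)⟩
    rw [hap.coprime_iff_not_dvd]
    intro hdvd
    rw [hap.prime.dvd_finset_prod_iff] at hdvd
    obtain ⟨q, hqs, hq2⟩ := hdvd
    exact ha (((hs q (Finset.mem_insert_of_mem hqs)).dvd_iff_eq hap.ne_one).1 hq2 ▸ hqs)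

lemma sq_prod_dvd {n : ℕ} {s : Finset ℕ} (hs : ∀ q ∈ s, q.Prime)
    (hd : ∀ q ∈ s, q ^ 2 ∣ n) : (∏ q ∈ s, q) ^ 2 ∣ n := by
  classical
  induction s using Finset.induction_on with
  | empty => simpa using one_dvd n
  | @insert a s ha ih =>
    rw [Finset.prod_insert ha, mul_pow]
    have hap := hs a (Finset.mem_insert_self a s)
    have hcop : Nat.Coprime a (∏ q ∈ s, q) := by
      rw [hap.coprime_iff_not_dvd]
      intro hdvd
      rw [hap.prime.dvd_finset_prod_iff] at hdvd
      obtain ⟨q, hqs, hq2⟩ := hdvd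
      exact ha (((hs q (Finset.mem_insert_of_mem hqs)).dvd_iff_eq hap.ne_one).1 hq2 ▸ hqs)
    exact Nat.Coprime.mul_dvd_of_dvd_of_dvd (Nat.Coprime.pow 2 2 hcop)
      (hd a (Finset.mem_insert_self a s))
      (ih (fun q hqs => hs q (Finset.mem_insert_of_mem hqs))
        (fun q hqs => hd q (Finset.mem_insert_of_mem hqs)))

lemma sq_indicator {N n : ℕ} (h1 : 1 ≤ n) (hN : n ≤ N) :
    (∑ d ∈ (Finset.Icc 1 N).filter (fun d => d ^ 2 ∣ n), μ d)
      = if Squarefree n then 1 else 0 := by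
  classical
  set m := ∏ q ∈ n.primeFactors.filter (fun q => q ^ 2 ∣ n), q with hm
  have hprimes : ∀ q ∈ n.primeFactors.filter (fun q => q ^ 2 ∣ n), q.Prime :=
    fun q hq => Nat.prime_of_mem_primeFactors (Finset.mem_filter.1 hq).1
  have hmsf : Squarefree m := sf_prod_primes hprimes
  have hn0 : n ≠ 0 := by omega
  have hm0 : m ≠ 0 := hmsf.ne_zero
  have hm2 : m ^ 2 ∣ n := sq_prod_dvd hprimes fun q hq => (Finset.mem_filter.1 hq).2
  have key : ∀ d : ℕ, Squarefree d → (d ^ 2 ∣ n ↔ d ∣ m) := by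
    intro d hd
    constructor
    · intro hdn
      have hqm : ∀ q ∈ d.primeFactors, q ∣ m := by
        intro q hq
        obtain ⟨hqp, hqd, _⟩ := Nat.mem_primeFactors.1 hq
        refine Finset.dvd_prod_of_mem _ (Finset.mem_filter.2 ⟨Nat.mem_primeFactors.2
          ⟨hqp, dvd_trans hqd (dvd_trans (dvd_pow_self d two_ne_zero) hdn), hn0⟩,
          dvd_trans (pow_dvd_pow_of_dvd hqd 2) hdn⟩)
      calc d = ∏ q ∈ d.primeFactors, q := (Nat.prod_primeFactors_of_squarefree hd).symm
        _ ∣ m := Finset.prod_primes_dvd m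
            (fun q hq => (Nat.prime_of_mem_primeFactors hq).prime) hqm
    · intro hdm
      exact dvd_trans (pow_dvd_pow_of_dvd hdm 2) hm2
  have hfe : ((Finset.Icc 1 N).filter (fun d => d ^ 2 ∣ n)).filter Squarefree
      = m.divisors := by
    ext d
    simp only [Finset.mem_filter, Finset.mem_Icc, Nat.mem_divisors]
    constructor
    · rintro ⟨⟨_, hdn⟩, hd⟩
      exact ⟨(key d hd).1 hdn, hm0⟩
    · rintro ⟨hdm, _⟩
      have hd : Squarefree d := hmsf.squarefree_of_dvd hdm
      have hd0 : d ≠ 0 := hd.ne_zero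
      have hdn : d ^ 2 ∣ n := (key d hd).2 hdm
      have hd2 : d ^ 2 ≤ n := Nat.le_of_dvd (by omega) hdn
      have : d ≤ d ^ 2 := by nlinarith [Nat.one_le_iff_ne_zero.2 hd0]
      have hd1 : 1 ≤ d := Nat.one_le_iff_ne_zero.2 hd0
      exact ⟨⟨⟨hd1, by omega⟩, hdn⟩, hd⟩
  have hsum : (∑ d ∈ (Finset.Icc 1 N).filter (fun d => d ^ 2 ∣ n), μ d)
      = ∑ d ∈ m.divisors, μ d := by
    rw [← hfe]
    exact (Finset.sum_filter_of_ne fun d _ hne =>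
      moebius_ne_zero_iff_squarefree.1 hne).symm
  rw [hsum]
  have hdiv : (∑ d ∈ m.divisors, μ d) = if m = 1 then 1 else 0 := by
    rw [← coe_mul_zeta_apply, moebius_mul_coe_zeta, one_apply]
  rw [hdiv]
  congr 1
  rw [eq_iff_iff]
  constructor
  · intro hme
    rw [Nat.squarefree_iff_prime_squarefree]
    intro q hq hqn
    have hq2 : q ^ 2 ∣ n := by rwa [pow_two]
    have hqmem : q ∈ n.primeFactors.filter fun q => q ^ 2 ∣ n :=
      Finset.mem_filter.2 ⟨Nat.mem_primeFactors.2 ⟨hq,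
        dvd_trans (dvd_mul_right q q) hqn, hn0⟩, hq2⟩
    have : q ∣ m := Finset.dvd_prod_of_mem _ hqmem
    rw [hme, Nat.dvd_one] at this
    exact hq.ne_one this
  · intro hsf
    have : n.primeFactors.filter (fun q => q ^ 2 ∣ n) = ∅ := by
      rw [Finset.filter_eq_empty_iff]
      intro q hq hq2
      exact (Nat.squarefree_iff_prime_squarefree.1 hsf) q
        (Nat.prime_of_mem_primeFactors hq) (by rwa [← pow_two])
    rw [hm, this, Finset.prod_empty]

lemma count_dvd_not_dvd (N k p : ℕ) (hp : p.Prime) (hk : 1 ≤ k) (hpk : ¬ p ∣ k) :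
    ((Finset.Icc 1 N).filter (fun n => k ∣ n ∧ ¬ p ∣ n)).card = N / k - N / (p * k) := by
  classical
  have hIcc : Finset.Icc 1 N = Finset.Ioc 0 N := by
    ext x; simp [Nat.lt_iff_add_one_le]
  have h1 : ((Finset.Icc 1 N).filter (fun n => k ∣ n)).card = N / k := by
    rw [hIcc]; exact Nat.Ioc_filter_dvd_card_eq_div N k
  have hcop : Nat.Coprime p k := (Nat.Prime.coprime_iff_not_dvd hp).2 hpk
  have h2 : ((Finset.Icc 1 N).filter (fun n => k ∣ n ∧ p ∣ n)).card = N / (p * k) := by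
    have : ((Finset.Icc 1 N).filter (fun n => k ∣ n ∧ p ∣ n))
        = (Finset.Icc 1 N).filter (fun n => (p * k) ∣ n) := by
      ext n
      simp only [Finset.mem_filter]
      constructor
      · rintro ⟨hn, hkn, hpn⟩
        exact ⟨hn, hcop.mul_dvd_of_dvd_of_dvd hpn hkn⟩
      · rintro ⟨hn, hdvd⟩
        exact ⟨hn, (dvd_mul_left k p) |>.trans hdvd, (dvd_mul_right p k).trans hdvd⟩
    rw [this, hIcc]; exact Nat.Ioc_filter_dvd_card_eq_div N (p * k)
  have key := Finset.card_filter_add_card_filter_not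
    (s := (Finset.Icc 1 N).filter (fun n => k ∣ n)) (p := fun n => p ∣ n)
  rw [Finset.filter_filter, Finset.filter_filter] at key
  rw [h1] at key
  rw [h2] at key
  omega

lemma count_identity (p : ℕ) (hp : p.Prime) (N : ℕ) :
    ((((Finset.Icc 1 N).filter (fun n => Squarefree n ∧ ¬ p ∣ n)).card : ℤ))
      = ∑ d ∈ Finset.Icc 1 N,
          (if p ∣ d then 0
           else μ d * ((N / d ^ 2 : ℕ) - ((N / (p * d ^ 2) : ℕ) : ℤ))) := by
  classical
  have step1 : ((((Finset.Icc 1 N).filter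
        (fun n => Squarefree n ∧ ¬ p ∣ n)).card : ℤ))
      = ∑ n ∈ Finset.Icc 1 N, (if Squarefree n ∧ ¬ p ∣ n then (1 : ℤ) else 0) := by
    rw [Finset.card_filter]
    push_cast
    rfl
  rw [step1]
  have step2 : ∀ n ∈ Finset.Icc 1 N,
      (if Squarefree n ∧ ¬ p ∣ n then (1 : ℤ) else 0)
        = ∑ d ∈ Finset.Icc 1 N, (if d ^ 2 ∣ n ∧ ¬ p ∣ n then μ d else 0) := by
    intro n hn
    rw [Finset.mem_Icc] at hn
    by_cases hpn : p ∣ n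
    · simp [hpn]
    · have : ∀ d, (d ^ 2 ∣ n ∧ ¬ p ∣ n) = (d ^ 2 ∣ n) := by
        intro d; simp [hpn]
      simp only [this, hpn, and_true, not_false_eq_true]
      rw [← Finset.sum_filter, sq_indicator hn.1 hn.2]
  rw [Finset.sum_congr rfl step2, Finset.sum_comm]
  refine Finset.sum_congr rfl fun d hd => ?_
  rw [Finset.mem_Icc] at hd
  by_cases hpd : p ∣ d
  · have : ∀ n ∈ Finset.Icc 1 N, (if d ^ 2 ∣ n ∧ ¬ p ∣ n then (μ d : ℤ) else 0) = 0 := by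
      intro n _
      rw [if_neg]
      rintro ⟨hdn, hpn⟩
      exact hpn (dvd_trans (dvd_trans hpd (dvd_pow_self d two_ne_zero)) hdn)
    rw [Finset.sum_congr rfl this, Finset.sum_const_zero, if_pos hpd]
  · rw [if_neg hpd]
    have hsum : ∑ n ∈ Finset.Icc 1 N, (if d ^ 2 ∣ n ∧ ¬ p ∣ n then (μ d : ℤ) else 0)
        = μ d * (((Finset.Icc 1 N).filter (fun n => d ^ 2 ∣ n ∧ ¬ p ∣ n)).card : ℤ) := by
      rw [← Finset.sum_filter, Finset.sum_const, nsmul_eq_mul, mul_comm]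
    rw [hsum, count_dvd_not_dvd N (d ^ 2) p hp (Nat.one_le_pow _ _ (by omega))
      (fun h => hpd (hp.dvd_of_dvd_pow h))]
    have hle : N / (p * d ^ 2) ≤ N / d ^ 2 :=
      Nat.div_le_div_left (Nat.le_mul_of_pos_left _ hp.pos)
        (pow_pos (by omega : 0 < d) 2)
    rw [Nat.cast_sub hle]

-- (a) floor-quotient density
lemma tendsto_nat_div (k : ℕ) (hk : 1 ≤ k) :
    Tendsto (fun N : ℕ => ((N / k : ℕ) : ℝ) / N) atTop (𝓝 (1 / k)) := by
  have hk0 : (k : ℝ) ≠ 0 := Nat.cast_ne_zero.2 (by omega)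
  have heq : ∀ᶠ N : ℕ in atTop, (1 : ℝ) / k - ((N % k : ℕ) : ℝ) / (k * N)
      = ((N / k : ℕ) : ℝ) / N := by
    filter_upwards [eventually_ge_atTop 1] with N hN
    have hN0 : (N : ℝ) ≠ 0 := Nat.cast_ne_zero.2 (by omega)
    have hmod : (k : ℝ) * ((N / k : ℕ) : ℝ) + ((N % k : ℕ) : ℝ) = N := by
      exact_mod_cast congrArg (fun x : ℕ => (x : ℝ)) (Nat.div_add_mod N k)
    field_simp
    nlinarith [hmod]
  refine Tendsto.congr' heq ?_
  have hz : Tendsto (fun N : ℕ => ((N % k : ℕ) : ℝ) / (k * N)) atTop (𝓝 0) := by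
    refine squeeze_zero (fun N => by positivity) (fun N => ?_)
      (tendsto_one_div_atTop_nhds_zero_nat)
    rcases Nat.eq_zero_or_pos N with h | h
    · simp [h]
    have hN0 : (0:ℝ) < N := by exact_mod_cast h
    rw [div_le_div_iff₀ (by positivity) hN0]
    have h1 : ((N % k : ℕ) : ℝ) ≤ k := by
      exact_mod_cast (Nat.mod_lt N (by omega : 0 < k)).le
    calc ((N % k : ℕ) : ℝ) * N ≤ k * N := by nlinarith
      _ = 1 * (k * N) := by ring
  simpa using (tendsto_const_nhds (x := (1:ℝ)/k)).sub hz

-- (b) sum of mu n / n^2 = 6 / pi^2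
lemma moebius_tsum : ∑' n : ℕ, ((μ n : ℝ) / (n : ℝ) ^ 2) = 6 / Real.pi ^ 2 := by
  have hs : (1 : ℝ) < (2 : ℂ).re := by norm_num
  have hmul := LSeries_one_mul_Lseries_moebius (s := 2) hs
  rw [LSeries_one_eq_riemannZeta hs, riemannZeta_two] at hmul
  have hpi : ((Real.pi : ℂ)) ^ 2 ≠ 0 := by
    simpa using Complex.ofReal_ne_zero.2 Real.pi_ne_zero
  have hL : LSeries (fun n => (μ n : ℂ)) 2 = 6 / (Real.pi : ℂ) ^ 2 := by
    field_simp at hmul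
    rw [eq_div_iff hpi]
    linear_combination hmul
  have hterm : ∀ n : ℕ, LSeries.term (fun n => (μ n : ℂ)) 2 n
      = ((((μ n : ℝ) / (n : ℝ) ^ 2) : ℝ) : ℂ) := by
    intro n
    rcases Nat.eq_zero_or_pos n with h | h
    · simp [LSeries.term, h]
    · rw [LSeries.term, if_neg (by omega)]
      push_cast
      norm_num
  have : LSeries (fun n => (μ n : ℂ)) 2 = ((∑' n : ℕ, ((μ n : ℝ) / (n : ℝ) ^ 2) : ℝ) : ℂ) := by
    rw [LSeries, Complex.ofReal_tsum]
    exact tsum_congr hterm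
  rw [this] at hL
  refine Complex.ofReal_injective ?_
  rw [hL]
  push_cast
  ring

lemma summable_aux (f : ℕ → ℝ) (hf : ∀ d, |f d| ≤ 1 / (d : ℝ) ^ 2) : Summable f :=
  Summable.of_norm_bounded ((Real.summable_one_div_nat_pow).2 one_lt_two)
    (fun d => by simpa using hf d)

lemma mu_div_abs (d : ℕ) : |(μ d : ℝ) / (d : ℝ) ^ 2| ≤ 1 / (d : ℝ) ^ 2 := by
  rcases Nat.eq_zero_or_pos d with rfl | hd
  · simp
  rw [abs_div, abs_pow, Nat.abs_cast, div_le_div_iff₀ (by positivity) (by positivity)]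
  have h1 : |(μ d : ℝ)| ≤ 1 := by exact_mod_cast abs_moebius_le_one (n := d)
  nlinarith [pow_pos (show (0:ℝ) < d by exact_mod_cast hd) 2]

lemma one_div_sq_nonneg (d : ℕ) : (0:ℝ) ≤ 1 / (d : ℝ) ^ 2 :=
  div_nonneg zero_le_one (by positivity)

lemma t_summable (p : ℕ) :
    Summable (fun d : ℕ => if p ∣ d then (0:ℝ) else (μ d : ℝ) / (d:ℝ) ^ 2) := by
  refine summable_aux _ fun d => ?_
  by_cases h : p ∣ d
  · simpa [h] using one_div_sq_nonneg d
  · simpa [h] using mu_div_abs d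

lemma s_summable : Summable (fun d : ℕ => (μ d : ℝ) / (d:ℝ) ^ 2) :=
  summable_aux _ mu_div_abs

lemma t_relation (p : ℕ) (hp : p.Prime) :
    (∑' d : ℕ, (μ d : ℝ) / (d:ℝ) ^ 2)
      - (∑' d : ℕ, if p ∣ d then (0:ℝ) else (μ d : ℝ) / (d:ℝ) ^ 2)
    = -(1 / (p:ℝ) ^ 2) * (∑' d : ℕ, if p ∣ d then (0:ℝ) else (μ d : ℝ) / (d:ℝ) ^ 2) := by
  rw [← Summable.tsum_sub s_summable (t_summable p)]
  have hpt : ∀ d : ℕ, (μ d : ℝ) / (d:ℝ) ^ 2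
      - (if p ∣ d then (0:ℝ) else (μ d : ℝ) / (d:ℝ) ^ 2)
      = (if p ∣ d then (μ d : ℝ) / (d:ℝ) ^ 2 else 0) := by
    intro d; by_cases h : p ∣ d <;> simp [h]
  rw [tsum_congr hpt]
  have hinj : Function.Injective (fun m : ℕ => p * m) :=
    fun a b h => by
      have := hp.pos
      exact Nat.eq_of_mul_eq_mul_left this h
  rw [← Function.Injective.tsum_eq hinj (f := fun d =>
      (if p ∣ d then (μ d : ℝ) / (d:ℝ) ^ 2 else 0)) ?side]
  · have hterm : ∀ m : ℕ, (if p ∣ p * m then (μ (p * m) : ℝ) / ((p*m : ℕ):ℝ) ^ 2 else 0)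
        = -(1 / (p:ℝ) ^ 2) * (if p ∣ m then (0:ℝ) else (μ m : ℝ) / (m:ℝ) ^ 2) := by
      intro m
      rw [if_pos (dvd_mul_right p m)]
      by_cases h : p ∣ m
      · have hns : ¬ Squarefree (p * m) := fun hsf =>
          hp.ne_one (Nat.isUnit_iff.1 (hsf p (mul_dvd_mul_left p h)))
        rw [if_pos h, moebius_eq_zero_of_not_squarefree hns]
        simp
      · have hcop : Nat.Coprime p m := (hp.coprime_iff_not_dvd).2 h
        have hmul : μ (p * m) = μ p * μ m :=
          isMultiplicative_moebius.map_mul_of_coprime hcop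
        rw [if_neg h, hmul, moebius_apply_prime hp]
        have hm0 : (p : ℝ) ≠ 0 := Nat.cast_ne_zero.2 hp.pos.ne'
        push_cast
        by_cases hm : (m:ℝ) = 0
        · simp [hm]
        rw [mul_pow]
        field_simp
    rw [tsum_congr hterm, tsum_mul_left]
  · intro x hx
    have hpx : p ∣ x := by
      by_contra h
      exact (Function.mem_support.1 hx) (by simp [h])
    obtain ⟨c, hc⟩ := hpx
    exact ⟨c, hc.symm⟩

noncomputable def fA (p N d : ℕ) : ℝ :=
  if p ∣ d then 0
  else (μ d : ℝ) * (((N / d ^ 2 : ℕ) : ℝ) / N - ((N / (p * d ^ 2) : ℕ) : ℝ) / N)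

noncomputable def gA (p d : ℕ) : ℝ :=
  if p ∣ d then 0 else (μ d : ℝ) * (1 / (d:ℝ) ^ 2 - 1 / ((p:ℝ) * (d:ℝ) ^ 2))

lemma hd_ne {p d : ℕ} (h : ¬ p ∣ d) : 1 ≤ d := by
  rcases Nat.eq_zero_or_pos d with rfl | h1
  · exact absurd (dvd_zero p) h
  · omega

lemma fA_tendsto (p : ℕ) (hp : p.Prime) (d : ℕ) :
    Tendsto (fun N => fA p N d) atTop (𝓝 (gA p d)) := by
  by_cases h : p ∣ d
  · simp only [fA, gA, h, if_true]
    exact tendsto_const_nhds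
  · have hd1 : 1 ≤ d := hd_ne h
    have h1 := tendsto_nat_div (d ^ 2) (Nat.one_le_pow _ _ (by omega))
    have h2 := tendsto_nat_div (p * d ^ 2)
      (Nat.one_le_pow _ _ (by omega) |>.trans (Nat.le_mul_of_pos_left _ hp.pos))
    rw [Nat.cast_pow] at h1
    rw [Nat.cast_mul, Nat.cast_pow] at h2
    have := (h1.sub h2).const_mul (μ d : ℝ)
    simp only [fA, gA, h, if_false]
    exact this

lemma fA_bound (p : ℕ) (hp : p.Prime) (N : ℕ) (hN : 1 ≤ N) (d : ℕ) :
    ‖fA p N d‖ ≤ 1 / (d:ℝ) ^ 2 := by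
  by_cases h : p ∣ d
  · simpa [fA, h] using div_nonneg zero_le_one (by positivity)
  · have hd1 : 1 ≤ d := hd_ne h
    have hN0 : (0:ℝ) < N := by exact_mod_cast hN
    have hd0 : (0:ℝ) < (d:ℝ) ^ 2 := by positivity
    have hb_le_a : ((N / (p * d ^ 2) : ℕ) : ℝ) ≤ ((N / d ^ 2 : ℕ) : ℝ) := by
      exact_mod_cast Nat.cast_le.2 (Nat.div_le_div_left
        (Nat.le_mul_of_pos_left _ hp.pos) (pow_pos (by omega) 2))
    have ha_le : ((N / d ^ 2 : ℕ) : ℝ) ≤ (N : ℝ) / (d:ℝ) ^ 2 := by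
      have := Nat.cast_div_le (m := N) (n := d ^ 2) (α := ℝ)
      push_cast at this ⊢
      exact this
    have hmu : |(μ d : ℝ)| ≤ 1 := by exact_mod_cast abs_moebius_le_one (n := d)
    simp only [fA, h, if_false]
    rw [Real.norm_eq_abs, abs_mul]
    have habs2 : |((N / d ^ 2 : ℕ) : ℝ) / N - ((N / (p * d ^ 2) : ℕ) : ℝ) / N|
        ≤ 1 / (d:ℝ) ^ 2 := by
      rw [abs_of_nonneg (sub_nonneg.2 (by gcongr))]
      have key : ((N / d ^ 2 : ℕ) : ℝ) / N ≤ 1 / (d:ℝ) ^ 2 := by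
        rw [div_le_div_iff₀ hN0 hd0]
        calc ((N / d ^ 2 : ℕ) : ℝ) * (d:ℝ)^2
            ≤ ((N:ℝ)/(d:ℝ)^2) * (d:ℝ)^2 := mul_le_mul_of_nonneg_right ha_le hd0.le
          _ = (N:ℝ) := by field_simp
          _ = 1 * (N:ℝ) := (one_mul _).symm
      have hnn : (0:ℝ) ≤ ((N / (p * d ^ 2) : ℕ) : ℝ) / N :=
        div_nonneg (Nat.cast_nonneg _) hN0.le
      linarith
    calc |(μ d : ℝ)| * |((N / d ^ 2 : ℕ) : ℝ) / N - ((N / (p * d ^ 2) : ℕ) : ℝ) / N|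
        ≤ 1 * (1 / (d:ℝ)^2) := mul_le_mul hmu habs2 (abs_nonneg _) zero_le_one
      _ = 1 / (d:ℝ)^2 := one_mul _

lemma fA_tsum_eq (p : ℕ) (hp : p.Prime) (N : ℕ) (hN : 1 ≤ N) :
    (∑' d, fA p N d)
      = (((Finset.Icc 1 N).filter (fun n => Squarefree n ∧ ¬ p ∣ n)).card : ℝ) / N := by
  classical
  have hN0 : (N:ℝ) ≠ 0 := by positivity
  have hvanish : ∀ d ∉ Finset.Icc 1 N, fA p N d = 0 := by
    intro d hd
    rw [Finset.mem_Icc] at hd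
    by_cases h : p ∣ d
    · simp [fA, h]
    · have hd1 : 1 ≤ d := hd_ne h
      have hdN : N < d := by omega
      have h1 : N / d ^ 2 = 0 := Nat.div_eq_of_lt (by nlinarith)
      have h2 : N / (p * d ^ 2) = 0 := Nat.div_eq_of_lt (by nlinarith [hp.two_le])
      simp [fA, h, h1, h2]
  rw [tsum_eq_sum hvanish]
  have hcast : (((Finset.Icc 1 N).filter (fun n => Squarefree n ∧ ¬ p ∣ n)).card : ℝ)
      = (((∑ d ∈ Finset.Icc 1 N,
          (if p ∣ d then 0
           else μ d * ((N / d ^ 2 : ℕ) - ((N / (p * d ^ 2) : ℕ) : ℤ))) : ℤ)) : ℝ) := by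
    rw [← count_identity p hp N]
    norm_num
  rw [hcast, Int.cast_sum, Finset.sum_div]
  refine Finset.sum_congr rfl fun d hd => ?_
  by_cases h : p ∣ d
  · simp [fA, h]
  · simp only [fA, h, if_false, Int.cast_mul, Int.cast_sub, Int.cast_natCast]
    ring

lemma gA_tsum (p : ℕ) (hp : p.Prime) :
    (∑' d, gA p d) = 6 / Real.pi ^ 2 * (p / (p + 1)) := by
  have hp0 : (p : ℝ) ≠ 0 := Nat.cast_ne_zero.2 hp.pos.ne'
  have hp2 : (2:ℝ) ≤ p := by exact_mod_cast hp.two_le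
  have hgt : ∀ d, gA p d = (1 - 1/(p:ℝ))
      * (if p ∣ d then (0:ℝ) else (μ d : ℝ) / (d:ℝ) ^ 2) := by
    intro d
    by_cases h : p ∣ d
    · simp [gA, h]
    · have hd1 : 1 ≤ d := hd_ne h
      have hd0 : (d:ℝ) ≠ 0 := by positivity
      simp only [gA, h, if_false]
      field_simp
  rw [tsum_congr hgt, tsum_mul_left]
  have hrel := t_relation p hp
  rw [moebius_tsum] at hrel
  set T := ∑' d : ℕ, (if p ∣ d then (0:ℝ) else (μ d : ℝ) / (d:ℝ) ^ 2) with hT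
  have hpi : Real.pi ≠ 0 := Real.pi_ne_zero
  have hp1' : (p:ℝ) + 1 ≠ 0 := by positivity
  field_simp at hrel ⊢
  nlinarith [hrel, sq_nonneg ((p:ℝ) - 1), sq_nonneg ((p:ℝ) + 1)]

theorem squarefree_not_div_p_density (p : ℕ) (hp : p.Prime) :
    Tendsto (fun N : ℕ =>
      (((Finset.Icc 1 N).filter (fun n => Squarefree n ∧ ¬ p ∣ n)).card : ℝ) / N)
      atTop (nhds (6 / Real.pi ^ 2 * (p / (p + 1)))) := by
  have htend : Tendsto (fun N => ∑' d, fA p N d) atTop (𝓝 (∑' d, gA p d)) := by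
    refine tendsto_tsum_of_dominated_convergence
      (bound := fun d : ℕ => 1 / (d:ℝ) ^ 2)
      ((Real.summable_one_div_nat_pow).2 one_lt_two) (fA_tendsto p hp) ?_
    filter_upwards [eventually_ge_atTop 1] with N hN
    exact fA_bound p hp N hN
  rw [← gA_tsum p hp]
  refine htend.congr' ?_
  filter_upwards [eventually_ge_atTop 1] with N hN
  exact fA_tsum_eq p hp N hN

end Aux
end

section
/- Let T, P, S be pairwise disjoint sets of primes with T and S finite, and let s = ∏_{p∈S} p. If the set of square-free integers divisible by all primes in T ∪ S and by no prime in P has natural density D, then the set of square-free integers divisible by all primes in T and by no prime in P ∪ S has natural density s·D. -/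
open Filter Finset
open scoped Classical

theorem aux_sf_prod (S : Finset ℕ) (hS : ∀ p ∈ S, p.Prime) :
    Squarefree (∏ p ∈ S, p) := by
  induction S using Finset.induction with
  | empty => simpa using squarefree_one
  | @insert a t ha ih =>
    rw [Finset.prod_insert ha]
    have hap : a.Prime := hS a (Finset.mem_insert_self a t)
    have hco : Nat.Coprime a (∏ p ∈ t, p) := by
      refine Nat.Coprime.prod_right fun q hq => ?_
      exact (Nat.coprime_primes hap (hS q (Finset.mem_insert_of_mem hq))).2
        (by rintro rfl; exact ha hq)
    exact (Nat.squarefree_mul hco).2 ⟨hap.squarefree,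
      ih (fun p hp => hS p (Finset.mem_insert_of_mem hp))⟩

theorem density_transfer (T S : Finset ℕ) (P : Set ℕ)
    (hT : ∀ p ∈ T, p.Prime) (hS : ∀ p ∈ S, p.Prime) (hP : ∀ p ∈ P, p.Prime)
    (hTS : Disjoint T S) (hTP : ∀ p ∈ T, p ∉ P) (hSP : ∀ p ∈ S, p ∉ P)
    (s : ℕ) (hs : s = ∏ p ∈ S, p) (D : ℝ)
    (hD : Tendsto (fun N : ℕ =>
      (((Finset.Icc 1 N).filter (fun n => Squarefree n ∧ (∀ p ∈ T, p ∣ n) ∧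
        (∀ p ∈ S, p ∣ n) ∧ (∀ p ∈ P, ¬ p ∣ n))).card : ℝ) / N)
      atTop (nhds D)) :
    Tendsto (fun N : ℕ =>
      (((Finset.Icc 1 N).filter (fun n => Squarefree n ∧ (∀ p ∈ T, p ∣ n) ∧
        (∀ p ∈ S, ¬ p ∣ n) ∧ (∀ p ∈ P, ¬ p ∣ n))).card : ℝ) / N)
      atTop (nhds (s * D)) := by
  have hsdvd : ∀ p ∈ S, p ∣ s := by
    intro p hp; rw [hs]; exact Finset.dvd_prod_of_mem _ hp
  have hps : ∀ p, p.Prime → p ∣ s → p ∈ S := by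
    intro p pp hpd
    rw [hs] at hpd
    obtain ⟨q, hq, hpq⟩ := (pp.prime.dvd_finset_prod_iff _).1 hpd
    rwa [Nat.prime_dvd_prime_iff_eq pp (hS q hq) |>.1 hpq]
  have hs_pos : 0 < s := by
    rw [hs]; exact Finset.prod_pos fun p hp => (hS p hp).pos
  have hs_sf : Squarefree s := by rw [hs]; exact aux_sf_prod S hS
  -- key counting identity
  have key : ∀ N : ℕ,
      ((Finset.Icc 1 N).filter (fun n => Squarefree n ∧ (∀ p ∈ T, p ∣ n) ∧
        (∀ p ∈ S, ¬ p ∣ n) ∧ (∀ p ∈ P, ¬ p ∣ n))).card =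
      ((Finset.Icc 1 (s * N)).filter (fun n => Squarefree n ∧ (∀ p ∈ T, p ∣ n) ∧
        (∀ p ∈ S, p ∣ n) ∧ (∀ p ∈ P, ¬ p ∣ n))).card := by
    intro N
    apply Finset.card_bij (fun n _ => s * n)
    · rintro n hn
      simp only [Finset.mem_filter, Finset.mem_Icc] at hn ⊢
      obtain ⟨⟨hn1, hnN⟩, hsf, hTd, hSd, hPd⟩ := hn
      have hco : Nat.Coprime s n := by
        rw [hs]
        refine Nat.Coprime.prod_left fun p hp => ?_
        exact ((hS p hp).coprime_iff_not_dvd).2 (hSd p hp)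
      refine ⟨⟨le_trans hn1 (Nat.le_mul_of_pos_left n hs_pos),
        Nat.mul_le_mul_left s hnN⟩, (Nat.squarefree_mul hco).2 ⟨hs_sf, hsf⟩,
        fun p hp => (hTd p hp).mul_left s,
        fun p hp => (hsdvd p hp).mul_right n,
        fun p hp hpd => ?_⟩
      rcases (hP p hp).prime.dvd_mul.1 hpd with h | h
      · exact hSP _ (hps p (hP p hp) h) hp
      · exact hPd p hp h
    · intro n hn m hm h
      exact Nat.eq_of_mul_eq_mul_left hs_pos h
    · intro m hm
      simp only [Finset.mem_filter, Finset.mem_Icc] at hm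
      obtain ⟨⟨hm1, hmN⟩, hsf, hTd, hSd, hPd⟩ := hm
      have hsm : s ∣ m := by
        rw [hs]
        exact Finset.prod_primes_dvd m (fun p hp => (hS p hp).prime) hSd
      obtain ⟨n, rfl⟩ := hsm
      have hn1 : 1 ≤ n := by
        rcases Nat.eq_zero_or_pos n with rfl | h
        · simp at hm1
        · exact h
      have hnN : n ≤ N := Nat.le_of_mul_le_mul_left hmN hs_pos
      have hnsf : Squarefree n := hsf.squarefree_of_dvd (Dvd.intro_left s rfl)
      refine ⟨n, Finset.mem_filter.2 ⟨Finset.mem_Icc.2 ⟨hn1, hnN⟩, hnsf,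
        fun p hp => ?_, fun p hp hpd => ?_, fun p hp hpd => ?_⟩, rfl⟩
      · have hpT := hT p hp
        rcases hpT.prime.dvd_mul.1 (hTd p hp) with h | h
        · exact absurd (hps p hpT h) (Finset.disjoint_left.1 hTS hp)
        · exact h
      · have : p * p ∣ s * n := mul_dvd_mul (hsdvd p hp) hpd
        exact (hS p hp).one_lt.ne' (Nat.isUnit_iff.1 (hsf p this))
      · exact hPd p hp (hpd.mul_left s)
  -- limit
  have hmul : Tendsto (fun N : ℕ => s * N) atTop atTop :=
    tendsto_atTop_mono (fun N => Nat.le_mul_of_pos_left N hs_pos) tendsto_id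
  have h1 := (hD.comp hmul).const_mul (s : ℝ)
  refine h1.congr' ?_
  filter_upwards [eventually_ge_atTop 1] with N hN
  have hN0 : (N : ℝ) ≠ 0 := Nat.cast_ne_zero.2 (by omega)
  have hs0 : (s : ℝ) ≠ 0 := Nat.cast_ne_zero.2 hs_pos.ne'
  simp only [Function.comp, key N, Nat.cast_mul]
  field_simp
end

section
/- Let T be a finite set of primes and p a prime not in T. If the set of square-free integers divisible by all primes in T has natural density D, then the set of square-free integers divisible by p and by all primes in T has natural density D/(p+1). -/
open Filter Finset

lemma count_key (T : Finset ℕ) (hT : ∀ q ∈ T, q.Prime) (p : ℕ) (hp : p.Prime) (hpT : p ∉ T)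
    (N : ℕ) :
    ((Finset.Icc 1 N).filter (fun n => Squarefree n ∧ p ∣ n ∧ ∀ q ∈ T, q ∣ n)).card
      + ((Finset.Icc 1 (N / p)).filter (fun n => Squarefree n ∧ p ∣ n ∧ ∀ q ∈ T, q ∣ n)).card
    = ((Finset.Icc 1 (N / p)).filter (fun n => Squarefree n ∧ ∀ q ∈ T, q ∣ n)).card := by
  classical
  have hp0 : 0 < p := hp.pos
  have h1 : ((Finset.Icc 1 N).filter (fun n => Squarefree n ∧ p ∣ n ∧ ∀ q ∈ T, q ∣ n)).card
      = ((Finset.Icc 1 (N / p)).filter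
          (fun m => (Squarefree m ∧ ∀ q ∈ T, q ∣ m) ∧ ¬ p ∣ m)).card := by
    apply Finset.card_bij' (fun n _ => n / p) (fun m _ => p * m)
    · intro n hn
      simp only [mem_filter, mem_Icc] at hn ⊢
      obtain ⟨⟨hn1, hnN⟩, hsq, hpn, hTn⟩ := hn
      obtain ⟨m, rfl⟩ := hpn
      rw [Nat.mul_div_cancel_left _ hp0]
      have hm0 : 0 < m := Nat.pos_of_ne_zero (by rintro rfl; simp at hn1)
      have hmsq : Squarefree m := Squarefree.squarefree_of_dvd ⟨p, mul_comm p m⟩ hsq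
      have hpm : ¬ p ∣ m := fun hd => hp.not_isUnit (hsq p (mul_dvd_mul_left p hd))
      refine ⟨⟨hm0, ?_⟩, ⟨hmsq, ?_⟩, hpm⟩
      · calc m = p * m / p := (Nat.mul_div_cancel_left _ hp0).symm
          _ ≤ N / p := Nat.div_le_div_right hnN
      · intro q hq
        have hq' := hT q hq
        have hqp : q ≠ p := fun h => hpT (h ▸ hq)
        exact (Nat.Coprime.dvd_of_dvd_mul_left
          ((Nat.coprime_primes hq' hp).mpr hqp) (hTn q hq))
    · intro m hm
      simp only [mem_filter, mem_Icc] at hm ⊢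
      obtain ⟨⟨hm1, hmN⟩, ⟨hmsq, hTm⟩, hpm⟩ := hm
      have hcop : Nat.Coprime p m := (hp.coprime_iff_not_dvd).mpr hpm
      refine ⟨⟨le_trans hm1 (Nat.le_mul_of_pos_left m hp0), ?_⟩, ?_, ⟨m, rfl⟩, ?_⟩
      · rw [mul_comm]; exact (Nat.le_div_iff_mul_le hp0).mp hmN
      · exact (Nat.squarefree_mul hcop).mpr ⟨hp.squarefree, hmsq⟩
      · intro q hq; exact (hTm q hq).mul_left p
    · intro n hn
      simp only [mem_filter, mem_Icc] at hn
      exact Nat.mul_div_cancel' hn.2.2.1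
    · intro m _
      exact Nat.mul_div_cancel_left _ hp0
  have h2 := Finset.card_filter_add_card_filter_not
      (s := (Finset.Icc 1 (N / p)).filter (fun n => Squarefree n ∧ ∀ q ∈ T, q ∣ n))
      (p := fun n => p ∣ n)
  rw [Finset.filter_filter, Finset.filter_filter] at h2
  have h3 : ((Finset.Icc 1 (N / p)).filter (fun n => Squarefree n ∧ p ∣ n ∧ ∀ q ∈ T, q ∣ n))
      = ((Finset.Icc 1 (N / p)).filter (fun n => (Squarefree n ∧ ∀ q ∈ T, q ∣ n) ∧ p ∣ n)) := by
    apply Finset.filter_congr; intro n _; tauto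
  rw [h1, h3]
  omega

theorem density_induction_step (T : Finset ℕ) (hT : ∀ q ∈ T, q.Prime)
    (p : ℕ) (hp : p.Prime) (hpT : p ∉ T) (D : ℝ)
    (hD : Tendsto (fun N : ℕ =>
      (((Finset.Icc 1 N).filter (fun n => Squarefree n ∧ ∀ q ∈ T, q ∣ n)).card : ℝ) / N)
      atTop (nhds D)) :
    Tendsto (fun N : ℕ =>
      (((Finset.Icc 1 N).filter (fun n => Squarefree n ∧ p ∣ n ∧
        ∀ q ∈ T, q ∣ n)).card : ℝ) / N)
      atTop (nhds (D / (p + 1))) := by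
  classical
  have hp0 : 0 < p := hp.pos
  have hpR : (1:ℝ) < p := by exact_mod_cast hp.one_lt
  have hpR0 : (0:ℝ) < p := lt_trans one_pos hpR
  set B : ℕ → ℕ := fun N =>
    ((Finset.Icc 1 N).filter (fun n => Squarefree n ∧ p ∣ n ∧ ∀ q ∈ T, q ∣ n)).card with hBdef
  set A : ℕ → ℕ := fun N =>
    ((Finset.Icc 1 N).filter (fun n => Squarefree n ∧ ∀ q ∈ T, q ∣ n)).card with hAdef
  set u : ℕ → ℝ := fun N => (B N : ℝ) / N with hudef
  -- basic bounds
  have hu0 : ∀ N, 0 ≤ u N := fun N => by positivity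
  have hu1 : ∀ N, u N ≤ 1 := by
    intro N
    rcases Nat.eq_zero_or_pos N with rfl | hN
    · simp [hudef]
    · have hBN : B N ≤ N := le_trans (Finset.card_filter_le _ _) (by simp)
      rw [hudef]
      rw [div_le_one (by exact_mod_cast hN)]
      exact_mod_cast hBN
  -- N / p → ∞
  have hq : Tendsto (fun N : ℕ => N / p) atTop atTop :=
    tendsto_atTop_atTop.mpr fun b => ⟨b * p, fun n hn => (Nat.le_div_iff_mul_le hp0).mpr hn⟩
  -- (N/p : ℝ)/N → 1/p
  have hw : Tendsto (fun N : ℕ => ((N / p : ℕ) : ℝ) / N) atTop (nhds (1 / p)) := by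
    have hlow : Tendsto (fun N : ℕ => 1 / (p:ℝ) - 1 / N) atTop (nhds (1 / p)) := by
      have h0 : Tendsto (fun N : ℕ => 1 / (N:ℝ)) atTop (nhds 0) :=
        tendsto_one_div_atTop_nhds_zero_nat
      simpa using (tendsto_const_nhds (x := 1 / (p:ℝ))).sub h0
    apply tendsto_of_tendsto_of_tendsto_of_le_of_le' hlow tendsto_const_nhds
    · filter_upwards [eventually_ge_atTop 1] with N hN
      have hN0 : (0:ℝ) < N := by exact_mod_cast hN
      have hdm := Nat.div_add_mod N p
      have hmlt : N % p < p := Nat.mod_lt _ hp0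
      have hcast : (N:ℝ) < p * ((N / p : ℕ) : ℝ) + p := by
        have : (N:ℝ) = p * ((N / p : ℕ) : ℝ) + ((N % p : ℕ) : ℝ) := by exact_mod_cast hdm.symm
        rw [this]
        have : ((N % p : ℕ) : ℝ) < p := by exact_mod_cast hmlt
        linarith
      rw [div_sub_div _ _ (ne_of_gt hpR0) (ne_of_gt hN0), div_le_div_iff₀ (by positivity) hN0]
      nlinarith [show (0:ℝ) ≤ ((N / p : ℕ):ℝ) from Nat.cast_nonneg _]
    · filter_upwards [eventually_ge_atTop 1] with N hN
      have hN0 : (0:ℝ) < N := by exact_mod_cast hN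
      have h1 : ((N / p : ℕ) : ℝ) ≤ (N:ℝ) / p := Nat.cast_div_le
      rw [div_le_div_iff₀ hN0 hpR0]
      calc ((N / p : ℕ) : ℝ) * p ≤ ((N:ℝ) / p) * p := by nlinarith
        _ = N := by field_simp
        _ = 1 * N := (one_mul _).symm
  -- A(N/p)/N → D/p
  have hA3 : Tendsto (fun N : ℕ => (A (N / p) : ℝ) / N) atTop (nhds (D / p)) := by
    have h := (hD.comp hq).mul hw
    rw [mul_one_div] at h
    apply h.congr'
    filter_upwards [eventually_ge_atTop p] with N hN
    have h1 : 1 ≤ N / p := (Nat.one_le_div_iff hp0).mpr hN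
    have hne : ((N / p : ℕ) : ℝ) ≠ 0 := by
      have : (0:ℝ) < ((N / p : ℕ) : ℝ) := by exact_mod_cast h1
      exact ne_of_gt this
    have hN0 : ((N:ℕ) : ℝ) ≠ 0 := by
      have : 0 < N := lt_of_lt_of_le hp0 hN
      exact_mod_cast Nat.pos_iff_ne_zero.mp this
    simp only [Function.comp]
    field_simp
    rfl
  -- key limit : u N + u(N/p)/p → D/p
  have hkey : Tendsto (fun N : ℕ => u N + u (N / p) / p) atTop (nhds (D / p)) := by
    have hsum : Tendsto (fun N : ℕ => u N + u (N / p) * (((N / p : ℕ) : ℝ) / N))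
        atTop (nhds (D / p)) := by
      apply hA3.congr'
      filter_upwards [eventually_ge_atTop p] with N hN
      have h1 : 1 ≤ N / p := (Nat.one_le_div_iff hp0).mpr hN
      have hne : ((N / p : ℕ) : ℝ) ≠ 0 := by
        have : (0:ℝ) < ((N / p : ℕ) : ℝ) := by exact_mod_cast h1
        exact ne_of_gt this
      have hN0 : ((N:ℕ) : ℝ) ≠ 0 := by
        have : 0 < N := lt_of_lt_of_le hp0 hN
        exact_mod_cast Nat.pos_iff_ne_zero.mp this
      have hc := count_key T hT p hp hpT N
      have hcR : (A (N / p) : ℝ) = (B N : ℝ) + (B (N / p) : ℝ) := by exact_mod_cast hc.symm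
      rw [hudef]
      simp only []
      rw [hcR]
      field_simp
    have hz : Tendsto (fun N : ℕ => u (N / p) * (((N / p : ℕ) : ℝ) / N - 1 / p))
        atTop (nhds 0) := by
      have hg0 : Tendsto (fun N : ℕ => |((N / p : ℕ) : ℝ) / N - 1 / p|) atTop (nhds 0) := by
        simpa using (hw.sub_const (1 / (p:ℝ))).abs
      apply squeeze_zero_norm _ hg0
      intro N
      rw [Real.norm_eq_abs, abs_mul]
      calc |u (N / p)| * |((N / p : ℕ) : ℝ) / N - 1 / p|
          ≤ 1 * |((N / p : ℕ) : ℝ) / N - 1 / p| := by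
            apply mul_le_mul_of_nonneg_right _ (abs_nonneg _)
            rw [abs_of_nonneg (hu0 _)]; exact hu1 _
        _ = _ := one_mul _
    have := hsum.sub hz
    rw [sub_zero] at this
    apply this.congr
    intro N
    ring
  -- error term
  set e : ℕ → ℝ := fun N => u N + u (N / p) / p - D / p with hedef
  have he : Tendsto e atTop (nhds 0) := by
    have := hkey.sub_const (D / p)
    simpa using this
  set c : ℝ := D / ((p:ℝ) + 1) with hcdef
  set g : ℕ → ℝ := fun N => |u N - c| with hgdef
  have hgnn : ∀ N, 0 ≤ g N := fun N => abs_nonneg _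
  have hgbd : ∀ N, g N ≤ 1 + |c| := by
    intro N
    calc |u N - c| ≤ |u N| + |c| := abs_sub _ _
      _ ≤ 1 + |c| := by
          have := hu1 N
          have := hu0 N
          rw [abs_of_nonneg (hu0 N)]
          linarith
  have hbdd : IsBoundedUnder (· ≤ ·) atTop g := isBoundedUnder_of ⟨1 + |c|, hgbd⟩
  have hbdd' : IsBoundedUnder (· ≥ ·) atTop g := isBoundedUnder_of ⟨0, hgnn⟩
  have hcob : IsCoboundedUnder (· ≤ ·) atTop g := hbdd'.isCoboundedUnder_le
  set s := limsup g atTop with hsdef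
  -- recursion inequality
  have hrec : ∀ N, g N ≤ g (N / p) / p + |e N| := by
    intro N
    have hid : u N - c = -(u (N / p) - c) / p + e N := by
      rw [hedef, hcdef]
      have hpne : (p:ℝ) + 1 ≠ 0 := by positivity
      field_simp
      ring
    rw [hgdef]
    simp only []
    rw [hid]
    calc |-(u (N / p) - c) / p + e N| ≤ |-(u (N / p) - c) / p| + |e N| := abs_add_le _ _
      _ = |u (N / p) - c| / p + |e N| := by
          rw [abs_div, abs_neg, abs_of_pos hpR0]
      _ ≤ _ := le_refl _
  -- limsup of g ∘ (·/p) is at most s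
  have hcomp : limsup (fun N : ℕ => g (N / p)) atTop ≤ s := by
    have h1 : limsup (fun N : ℕ => g (N / p)) atTop
        = limsup g (map (fun N : ℕ => N / p) atTop) := limsup_comp g _ _
    rw [h1, hsdef]
    haveI : (map (fun N : ℕ => N / p) atTop).NeBot := map_neBot
    exact limsup_le_limsup_of_le hq
      (IsBoundedUnder.isCoboundedUnder_le (isBoundedUnder_of ⟨0, hgnn⟩)) hbdd
  have hgqbdd : IsBoundedUnder (· ≤ ·) atTop (fun N : ℕ => g (N / p)) :=
    isBoundedUnder_of ⟨1 + |c|, fun N => hgbd _⟩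
  -- s ≤ 0
  have hs0 : s ≤ 0 := by
    have hineq : ∀ ε : ℝ, 0 < ε → s ≤ (s + ε) / p + ε := by
      intro ε hε
      have h2 : ∀ᶠ N in atTop, g (N / p) < s + ε :=
        eventually_lt_of_limsup_lt (lt_of_le_of_lt hcomp (lt_add_of_pos_right s hε)) hgqbdd
      have h3 : ∀ᶠ N in atTop, |e N| < ε := by
        have habs : Tendsto (fun N => |e N|) atTop (nhds 0) := by simpa using he.abs
        exact habs.eventually_lt_const hε
      apply limsup_le_of_le hcob
      filter_upwards [h2, h3] with N h2 h3
      have hdiv : g (N / p) / (p:ℝ) ≤ (s + ε) / p := by gcongr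
      calc g N ≤ g (N / p) / p + |e N| := hrec N
        _ ≤ (s + ε) / p + ε := add_le_add hdiv h3.le
    have hs' : s - s / p ≤ 0 := by
      have h := le_of_forall_pos_le_add (a := s - s / p) (b := 0) ?_
      · exact h
      intro ε hε
      have hh := hineq (ε / 2) (by positivity)
      rw [add_div] at hh
      have hds : (ε / 2) / (p:ℝ) ≤ ε / 2 := div_le_self (by positivity) hpR.le
      linarith
    have h2 : s * p ≤ s := by
      have : s ≤ s / p := by linarith
      exact (le_div_iff₀ hpR0).mp this
    by_contra hcon
    push_neg at hcon
    nlinarith [mul_lt_mul_of_pos_left hpR hcon]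
  have hliminf : (0:ℝ) ≤ liminf g atTop := by
    apply le_liminf_of_le (hbdd.isCoboundedUnder_ge)
    exact Eventually.of_forall hgnn
  have hgt : Tendsto g atTop (nhds 0) :=
    tendsto_of_le_liminf_of_limsup_le hliminf hs0 hbdd hbdd'
  have hut : Tendsto u atTop (nhds c) := by
    rw [tendsto_iff_dist_tendsto_zero]
    apply hgt.congr
    intro N
    rw [hgdef, Real.dist_eq]
  exact hut
end

section
/- Let r and m be coprime positive integers and let P be the set of primes congruent to r mod m. Then ∏_{p∈P} p/(1+p) = 0, i.e., the partial products over primes of P in increasing order tend to 0. -/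
open Filter Finset ArithmeticFunction vonMangoldt LSeries Set in
lemma aux_not_summable {q : ℕ} [NeZero q] {a : ZMod q} (ha : IsUnit a) :
    ¬ Summable (fun n : ℕ ↦ if n.Prime ∧ (n : ZMod q) = a then 1 / (n : ℝ) else 0) := by
  set g : ℕ → ℝ := fun n ↦ if n.Prime ∧ (n : ZMod q) = a then 1 / (n : ℝ) else 0 with hgdef
  intro hS
  have hg0 : ∀ n, 0 ≤ g n := by
    intro n; simp only [hgdef]; split <;> positivity
  set φ : ℝ := (q.totient : ℝ)⁻¹ with hφdef
  have hφ : 0 < φ := inv_pos.mpr (by exact_mod_cast q.totient.pos_of_neZero)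
  -- choose a tail cutoff T with tail sum < φ/4
  obtain ⟨T, hT⟩ : ∃ T : ℕ, (∑' n, g n) - ∑ i ∈ range T, g i < φ / 4 := by
    have := hS.hasSum.tendsto_sum_nat
    have h := this.eventually (eventually_gt_nhds (show (∑' n, g n) - φ/4 < ∑' n, g n by linarith))
    obtain ⟨T, hT⟩ := h.exists
    exact ⟨T, by linarith⟩
  set t : ℕ → ℝ := fun n ↦ if T ≤ n then g n else 0 with htdef
  have ht0 : ∀ n, 0 ≤ t n := by intro n; simp only [htdef]; split; exacts [hg0 n, le_rfl]
  have htle : ∀ n, t n ≤ g n := by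
    intro n; simp only [htdef]; split; exacts [le_rfl, hg0 n]
  have hts : Summable t := hS.of_nonneg_of_le ht0 htle
  have httail : ∑' n, t n < φ / 4 := by
    have h1 : ∑ i ∈ range T, t i + ∑' i, t (i + T) = ∑' i, t i := hts.sum_add_tsum_nat_add T
    have h2 : ∑ i ∈ range T, t i = 0 :=
      Finset.sum_eq_zero fun i hi ↦ if_neg (by simpa using (mem_range.mp hi))
    have h3 : ∑' i, t (i + T) = ∑' i, g (i + T) :=
      tsum_congr fun i ↦ if_pos (Nat.le_add_left T i)
    have h4 : ∑ i ∈ range T, g i + ∑' i, g (i + T) = ∑' i, g i := hS.sum_add_tsum_nat_add T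
    rw [← h1, h2, zero_add, h3]
    linarith
  set b : ℕ → ℝ := fun n ↦ if n < T then (if n.Prime then residueClass a n else 0) / n else 0
    with hbdef
  have hb0 : ∀ n, 0 ≤ b n := by
    intro n; simp only [hbdef]
    split
    · split
      · have := residueClass_nonneg a n; positivity
      · simp
    · exact le_rfl
  have hbs : Summable b :=
    summable_of_ne_finset_zero (s := range T) fun n hn ↦ if_neg (by simpa using hn)
  have hD : Summable fun n : ℕ ↦ (if n.Prime then 0 else residueClass a n) / n :=
    summable_residueClass_non_primes_div a
  have hD0 : ∀ n : ℕ, 0 ≤ (if n.Prime then 0 else residueClass a n) / n := by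
    intro n
    have := residueClass_nonneg a n
    split <;> positivity
  -- pointwise key bound
  have key : ∀ {x : ℝ}, x ∈ Set.Ioc 1 2 → ∀ n : ℕ,
      residueClass a n / (n : ℝ) ^ x ≤
        (if n.Prime then 0 else residueClass a n) / n + b n + (2 / (x - 1)) * t n := by
    intro x hx n
    have hx1 : (0 : ℝ) < x - 1 := sub_pos.mpr hx.1
    have hc0 : (0 : ℝ) ≤ 2 / (x - 1) := by positivity
    rcases Nat.eq_zero_or_pos n with rfl | hn
    · rw [Nat.cast_zero, Real.zero_rpow (ne_of_gt (by linarith : (0:ℝ) < x)), div_zero]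
      have h1 := hD0 0
      have h2 := hb0 0
      have h3 := mul_nonneg hc0 (ht0 0)
      push_cast at h1 ⊢
      linarith
    have hn1 : (1 : ℝ) ≤ (n : ℝ) := by exact_mod_cast hn
    have hnp : (0 : ℝ) < (n : ℝ) := by positivity
    have hnx : (n : ℝ) ≤ (n : ℝ) ^ x := by
      conv_lhs => rw [← Real.rpow_one (n : ℝ)]
      exact Real.rpow_le_rpow_of_exponent_le hn1 hx.1.le
    have hnxpos : (0 : ℝ) < (n : ℝ) ^ x := by positivity
    by_cases hp : n.Prime
    · by_cases hcl : (n : ZMod q) = a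
      · have hrc : residueClass a n = Real.log n := by
          rw [residueClass, Set.indicator_of_mem (by exact hcl), vonMangoldt_apply_prime hp]
        have hgn : g n = 1 / n := if_pos ⟨hp, hcl⟩
        rcases lt_or_ge n T with hnT | hnT
        · -- small prime : absorbed in b
          have hbn : b n = residueClass a n / n := by
            simp only [hbdef, if_pos hnT, if_pos hp]
          have h4 : residueClass a n / (n : ℝ) ^ x ≤ residueClass a n / n :=
            div_le_div_of_nonneg_left (residueClass_nonneg a n) hnp hnx
          rw [if_pos hp]
          have h5 := mul_nonneg hc0 (ht0 n)
          have h6 : (0:ℝ) / (n:ℝ) = 0 := zero_div _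
          linarith
        · -- large prime : absorbed in tail
          have htn : t n = 1 / n := by rw [htdef]; simp only [if_pos hnT, hgn]
          have hlog : Real.log n ≤ 2 / (x - 1) * (n : ℝ) ^ ((x - 1) / 2) := by
            have := Real.log_natCast_le_rpow_div n (show (0:ℝ) < (x-1)/2 by positivity)
            calc Real.log n ≤ (n : ℝ) ^ ((x - 1) / 2) / ((x - 1) / 2) := this
              _ = 2 / (x - 1) * (n : ℝ) ^ ((x - 1) / 2) := by
                  field_simp
          have hstep : residueClass a n / (n : ℝ) ^ x
              ≤ (2 / (x - 1) * (n : ℝ) ^ ((x - 1) / 2)) / (n : ℝ) ^ x := by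
            rw [hrc]; gcongr
          have heq : (2 / (x - 1) * (n : ℝ) ^ ((x - 1) / 2)) / (n : ℝ) ^ x
              = 2 / (x - 1) * (n : ℝ) ^ ((x - 1) / 2 - x) := by
            rw [Real.rpow_sub hnp, mul_div_assoc]
          have hexp : (n : ℝ) ^ ((x - 1) / 2 - x) ≤ (n : ℝ) ^ (-1 : ℝ) :=
            Real.rpow_le_rpow_of_exponent_le hn1 (by linarith)
          have hfin : (n : ℝ) ^ (-1 : ℝ) = 1 / n := by
            rw [Real.rpow_neg_one]; exact inv_eq_one_div _
          rw [if_pos hp]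
          have h5 : residueClass a n / (n : ℝ) ^ x ≤ 2 / (x - 1) * (1 / n) := by
            calc residueClass a n / (n : ℝ) ^ x
                ≤ 2 / (x - 1) * (n : ℝ) ^ ((x - 1) / 2 - x) := heq ▸ hstep
              _ ≤ 2 / (x - 1) * (n : ℝ) ^ (-1 : ℝ) := by gcongr
              _ = 2 / (x - 1) * (1 / n) := by rw [hfin]
          rw [htn]
          have h7 := hb0 n
          have h6 : (0:ℝ) / (n:ℝ) = 0 := zero_div _
          linarith
      · have hrc : residueClass a n = 0 :=
          Set.indicator_of_notMem (by exact hcl) _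
        have h5 := hb0 n
        have h6 := mul_nonneg hc0 (ht0 n)
        rw [hrc, zero_div, if_pos hp, zero_div]
        linarith
    · -- not prime
      have h1 : residueClass a n / (n : ℝ) ^ x ≤ residueClass a n / n :=
        div_le_div_of_nonneg_left (residueClass_nonneg a n) hnp hnx
      rw [if_neg hp]
      have h5 := hb0 n
      have h6 := mul_nonneg hc0 (ht0 n)
      linarith
  -- sum the bound
  set D : ℝ := ∑' n : ℕ, (if n.Prime then 0 else residueClass a n) / n with hDdef
  set B : ℝ := ∑' n, b n with hBdef
  obtain ⟨C', hC'⟩ := LSeries_residueClass_lower_bound ha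
  have main : ∀ {x : ℝ}, x ∈ Set.Ioc 1 2 →
      φ / (x - 1) - C' ≤ D + B + (2 / (x - 1)) * ∑' n, t n := by
    intro x hx
    have hsum : Summable fun n : ℕ ↦ residueClass a n / (n : ℝ) ^ x :=
      summable_real_of_abscissaOfAbsConv_lt <|
        (abscissaOfAbsConv_residueClass_le_one a).trans_lt <| by exact_mod_cast hx.1
    have hRHSsum : Summable fun n : ℕ ↦
        (if n.Prime then 0 else residueClass a n) / n + b n + (2 / (x - 1)) * t n :=
      (hD.add hbs).add (hts.mul_left _)
    have h1 : ∑' n, residueClass a n / (n : ℝ) ^ x ≤ D + B + (2 / (x - 1)) * ∑' n, t n := by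
      calc ∑' n, residueClass a n / (n : ℝ) ^ x
          ≤ ∑' n, ((if n.Prime then 0 else residueClass a n) / n + b n + (2 / (x - 1)) * t n) :=
            Summable.tsum_le_tsum (key hx) hsum hRHSsum
        _ = D + B + (2 / (x - 1)) * ∑' n, t n := by
            rw [Summable.tsum_add (hD.add hbs) (hts.mul_left _), Summable.tsum_add hD hbs, tsum_mul_left]
    exact (hC' hx).trans h1
  -- derive the contradiction
  set E : ℝ := C' + D + B with hEdef
  have hmain' : ∀ {x : ℝ}, x ∈ Set.Ioc 1 2 → φ ≤ E * (x - 1) + 2 * ∑' n, t n := by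
    intro x hx
    have hx1 : (0 : ℝ) < x - 1 := sub_pos.mpr hx.1
    have := main hx
    have h2 : φ / (x - 1) ≤ E + (2 / (x - 1)) * ∑' n, t n := by
      rw [hEdef]; linarith
    have h3 := (div_le_iff₀ hx1).mp h2
    calc φ ≤ (E + 2 / (x - 1) * ∑' n, t n) * (x - 1) := h3
      _ = E * (x - 1) + 2 * ∑' n, t n := by field_simp
  have httail' : 2 * ∑' n, t n < φ / 2 := by linarith
  -- choose x close to 1
  set δ : ℝ := min 1 (φ / (4 * (1 + |E|))) with hδdef
  have hEpos : (0 : ℝ) < 1 + |E| := by positivity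
  have hδpos : 0 < δ := lt_min one_pos (by positivity)
  have hδle : δ ≤ 1 := min_le_left _ _
  have hx : (1 + δ) ∈ Set.Ioc (1:ℝ) 2 := ⟨by linarith, by linarith⟩
  have h6 := hmain' hx
  have h7 : E * (1 + δ - 1) ≤ φ / 4 := by
    have h8 : E * δ ≤ |E| * δ := mul_le_mul_of_nonneg_right (le_abs_self E) hδpos.le
    have h9 : |E| * δ ≤ |E| * (φ / (4 * (1 + |E|))) :=
      mul_le_mul_of_nonneg_left (min_le_right _ _) (abs_nonneg E)
    have h10 : |E| * (φ / (4 * (1 + |E|))) ≤ φ / 4 := by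
      calc |E| * (φ / (4 * (1 + |E|)))
          ≤ (1 + |E|) * (φ / (4 * (1 + |E|))) := by
            have h11 : (0:ℝ) ≤ φ / (4 * (1 + |E|)) := by positivity
            nlinarith
        _ = φ / 4 := by field_simp
    have : (1 : ℝ) + δ - 1 = δ := by ring
    rw [this]; linarith
  have h12 : φ < φ / 4 + φ / 2 := by
    calc φ ≤ E * (1 + δ - 1) + 2 * ∑' n, t n := h6
      _ ≤ φ / 4 + 2 * ∑' n, t n := by linarith
      _ < φ / 4 + φ / 2 := by linarith
  linarith

open Filter Finset

theorem prod_arith_prog_zero (r m : ℕ) (hr : 0 < r) (hm : 0 < m)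
    (hcop : Nat.Coprime r m) :
    Tendsto (fun n : ℕ =>
      ∏ p ∈ (Finset.range n).filter (fun p => p.Prime ∧ p % m = r % m),
        ((p : ℝ) / (1 + p))) atTop (nhds 0) := by
  haveI : NeZero m := ⟨hm.ne'⟩
  have ha : IsUnit ((r : ZMod m)) := (ZMod.isUnit_iff_coprime r m).mpr hcop
  set f : ℕ → ℝ := fun n ↦ if n.Prime ∧ n % m = r % m then 1 / (n : ℝ) else 0 with hfdef
  have hf0 : ∀ n, 0 ≤ f n := by intro n; simp only [hfdef]; split <;> positivity
  have hfcongr : f = fun n : ℕ ↦ if n.Prime ∧ (n : ZMod m) = (r : ZMod m) then 1 / (n : ℝ) else 0 := by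
    funext n
    have h : (n % m = r % m) ↔ ((n : ZMod m) = (r : ZMod m)) :=
      (ZMod.natCast_eq_natCast_iff' n r m).symm
    simp only [hfdef, h]
  have hnots : ¬ Summable f := by
    rw [hfcongr]
    exact aux_not_summable ha
  have hdiv : Tendsto (fun n ↦ ∑ i ∈ range n, f i) atTop atTop :=
    (not_summable_iff_tendsto_nat_atTop_of_nonneg hf0).mp hnots
  -- bound the product by exp of minus half the partial sum
  have hbound : ∀ n : ℕ,
      ∏ p ∈ (Finset.range n).filter (fun p => p.Prime ∧ p % m = r % m), ((p : ℝ) / (1 + p))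
        ≤ Real.exp (-(1/2) * ∑ i ∈ range n, f i) := by
    intro n
    have h1 : ∀ p ∈ (Finset.range n).filter (fun p => p.Prime ∧ p % m = r % m),
        ((p : ℝ) / (1 + p)) ≤ Real.exp (-(1/2) * (1 / p)) := by
      intro p hp
      obtain ⟨-, hp2, -⟩ := by simpa using hp
      have h2 : (1 : ℝ) ≤ p := by exact_mod_cast hp2.one_lt.le
      have hpos : (0 : ℝ) < 1 + p := by linarith
      have key : (p : ℝ) / (1 + p) = 1 - 1 / (1 + p) := by field_simp; ring
      have h3 : (1 : ℝ) - 1 / (1 + p) ≤ Real.exp (-(1 / (1 + p))) := by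
        have := Real.add_one_le_exp (-(1 / (1 + (p:ℝ))))
        linarith
      have h4 : -(1 / (1 + (p:ℝ))) ≤ -(1/2) * (1 / p) := by
        have hp0 : (0:ℝ) < p := by linarith
        have e1 : -(1/2 : ℝ) * (1/p) = -(1/(2*p)) := by field_simp
        rw [e1, neg_le_neg_iff]
        exact one_div_le_one_div_of_le hpos (by linarith)
      calc (p : ℝ) / (1 + p) = 1 - 1 / (1 + p) := key
        _ ≤ Real.exp (-(1 / (1 + p))) := h3
        _ ≤ Real.exp (-(1/2) * (1 / p)) := Real.exp_le_exp.mpr h4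
    calc ∏ p ∈ (Finset.range n).filter (fun p => p.Prime ∧ p % m = r % m), ((p : ℝ) / (1 + p))
        ≤ ∏ p ∈ (Finset.range n).filter (fun p => p.Prime ∧ p % m = r % m),
            Real.exp (-(1/2) * (1 / p)) := by
          refine Finset.prod_le_prod (fun p hp ↦ ?_) h1
          obtain ⟨-, hp2, -⟩ := by simpa using hp
          have : (0:ℝ) < p := by exact_mod_cast hp2.pos
          positivity
      _ = Real.exp (∑ p ∈ (Finset.range n).filter (fun p => p.Prime ∧ p % m = r % m),
            -(1/2) * (1 / p)) := (Real.exp_sum _ _).symm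
      _ = Real.exp (-(1/2) * ∑ i ∈ range n, f i) := by
          rw [← Finset.mul_sum, Finset.sum_filter]
  have hlow : ∀ n : ℕ, 0 ≤
      ∏ p ∈ (Finset.range n).filter (fun p => p.Prime ∧ p % m = r % m), ((p : ℝ) / (1 + p)) := by
    intro n
    refine Finset.prod_nonneg fun p hp ↦ ?_
    obtain ⟨-, hp2, -⟩ := by simpa using hp
    have h2 : (0 : ℝ) ≤ p := by positivity
    positivity
  have hupper : Tendsto (fun n : ℕ ↦ Real.exp (-(1/2) * ∑ i ∈ range n, f i)) atTop (nhds 0) := by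
    refine Real.tendsto_exp_atBot.comp ?_
    exact (tendsto_const_mul_atBot_of_neg (by norm_num : (-(1:ℝ)/2) < 0)).mpr hdiv |>.congr
      (fun n ↦ by ring_nf)
  exact tendsto_of_tendsto_of_tendsto_of_le_of_le tendsto_const_nhds hupper hlow hbound
end

section
/- Let r and m be coprime positive integers. The natural density of the set of square-free positive integers divisible by no prime congruent to r modulo m is zero. -/
open Filter Finset
open scoped Classical

open ArithmeticFunction ArithmeticFunction.vonMangoldt in
lemma aux_not_summable_one_div {q : ℕ} [NeZero q] {a : ZMod q} (ha : IsUnit a) :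
    ¬ Summable (fun n : ℕ ↦ if n.Prime ∧ (n : ZMod q) = a then (1:ℝ)/n else 0) := by
  intro hg
  set g : ℕ → ℝ := fun n ↦ if n.Prime ∧ (n : ZMod q) = a then (1:ℝ)/n else 0 with hgdef
  have hg0 : ∀ n, 0 ≤ g n := fun n ↦ by
    simp only [hgdef]; split <;> positivity
  set ε : ℝ := (q.totient : ℝ)⁻¹ with hεdef
  have hεpos : 0 < ε := inv_pos.mpr (by exact_mod_cast q.totient.pos_of_neZero)
  -- choose a tail cutoff T ≥ 1 with tail sum < ε/2
  obtain ⟨T₀, hT₀⟩ := (Metric.tendsto_atTop.mp (tendsto_sum_nat_add g)) (ε/2) (by positivity)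
  set T : ℕ := T₀ + 1 with hTdef
  have hT1 : 1 ≤ T := Nat.le_add_left 1 T₀
  have htail : ∑' k, g (k + T) ≤ ε/2 := by
    have := hT₀ T (Nat.le_add_right T₀ 1)
    rw [Real.dist_eq, sub_zero] at this
    exact le_of_lt (lt_of_abs_lt this)
  set D : ℝ := ∑ n ∈ range T, (vonMangoldt n : ℝ) with hDdef
  have hnp := summable_residueClass_non_primes_div a
  set B : ℝ := ∑' n : ℕ, (if n.Prime then 0 else residueClass a n) / n with hBdef
  -- upper bound for the L-series at real x ∈ (1,2]
  have key : ∀ x ∈ Set.Ioc (1:ℝ) 2,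
      ∑' n, residueClass a n / (n : ℝ) ^ x ≤ D + B + (ε/2) / (x - 1) := by
    rintro x ⟨hx1, hx2⟩
    have hx1' : (0:ℝ) < x - 1 := sub_pos.mpr hx1
    have Sfull : Summable fun n : ℕ ↦ residueClass a n / (n : ℝ) ^ x :=
      LSeries.summable_real_of_abscissaOfAbsConv_lt <|
        (abscissaOfAbsConv_residueClass_le_one a).trans_lt <| by exact_mod_cast hx1
    set fp : ℕ → ℝ := fun n ↦ (if n.Prime then residueClass a n else 0) / (n : ℝ) ^ x with hfp
    set fnp : ℕ → ℝ := fun n ↦ (if n.Prime then 0 else residueClass a n) / (n : ℝ) ^ x with hfnp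
    have hsplit : ∀ n, residueClass a n / (n : ℝ) ^ x = fp n + fnp n := by
      intro n
      simp only [hfp, hfnp, ← add_div]
      congr 1
      split <;> simp
    have hfp0 : ∀ n, 0 ≤ fp n := fun n ↦ by
      simp only [hfp]
      have := residueClass_nonneg a n
      split <;> positivity
    have hfnp0 : ∀ n, 0 ≤ fnp n := fun n ↦ by
      simp only [hfnp]
      have := residueClass_nonneg a n
      split <;> positivity
    have hfple : ∀ n, fp n ≤ residueClass a n / (n : ℝ) ^ x := fun n ↦ by
      rw [hsplit n]; exact le_add_of_nonneg_right (hfnp0 n)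
    have hfnple : ∀ n, fnp n ≤ residueClass a n / (n : ℝ) ^ x := fun n ↦ by
      rw [hsplit n]; exact le_add_of_nonneg_left (hfp0 n)
    have Sfp : Summable fp := Sfull.of_nonneg_of_le hfp0 hfple
    have Sfnp : Summable fnp := Sfull.of_nonneg_of_le hfnp0 hfnple
    have hrw : ∑' n, residueClass a n / (n : ℝ) ^ x = (∑' n, fp n) + ∑' n, fnp n := by
      rw [← Summable.tsum_add Sfp Sfnp]
      exact tsum_congr hsplit
    have hfnpB : ∑' n, fnp n ≤ B := by
      refine Summable.tsum_le_tsum (fun n ↦ ?_) Sfnp hnp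
      rcases Nat.eq_zero_or_pos n with rfl | hn
      · simp [hfnp, residueClass_apply_zero]
      · have h1n : (1:ℝ) ≤ (n:ℝ) := by exact_mod_cast hn
        have hle : (n:ℝ) ≤ (n:ℝ) ^ x := by
          conv_lhs => rw [← Real.rpow_one (n:ℝ)]
          exact Real.rpow_le_rpow_of_exponent_le h1n hx1.le
        have hnum : 0 ≤ (if n.Prime then 0 else residueClass a n) := by
          have := residueClass_nonneg a n
          split <;> positivity
        exact div_le_div_of_nonneg_left hnum (by positivity) hle
    have hfpD : ∑' n, fp n ≤ D + (ε/2) / (x - 1) := by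
      rw [← Summable.sum_add_tsum_nat_add T Sfp]
      gcongr
      · -- head sum ≤ D
        refine Finset.sum_le_sum fun n _ ↦ ?_
        rcases Nat.eq_zero_or_pos n with rfl | hn
        · simpa [hfp] using vonMangoldt_nonneg
        · have h1n : (1:ℝ) ≤ (n:ℝ) := by exact_mod_cast hn
          have h1 : (1:ℝ) ≤ (n:ℝ) ^ x := Real.one_le_rpow h1n (by linarith)
          have hnum : (if n.Prime then residueClass a n else 0) ≤ (vonMangoldt n : ℝ) := by
            split
            · exact residueClass_le a n
            · exact vonMangoldt_nonneg
          have hnum0 : 0 ≤ (if n.Prime then residueClass a n else 0) := by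
            have := residueClass_nonneg a n
            split <;> positivity
          calc fp n ≤ (if n.Prime then residueClass a n else 0) := div_le_self hnum0 h1
            _ ≤ (vonMangoldt n : ℝ) := hnum
      · -- tail sum ≤ (ε/2)/(x-1)
        have hgs : Summable fun k ↦ (1/(x-1)) * g (k + T) :=
          (((summable_nat_add_iff T).2 hg)).mul_left _
        have hle : ∀ k, fp (k + T) ≤ (1/(x-1)) * g (k + T) := by
          intro k
          set n := k + T with hn
          have hn1 : 1 ≤ n := le_trans hT1 (Nat.le_add_left T k)
          have h1n : (1:ℝ) ≤ (n:ℝ) := by exact_mod_cast hn1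
          have hn0 : (0:ℝ) < (n:ℝ) := by linarith
          by_cases hc : n.Prime ∧ (n : ZMod q) = a
          · have hrc : residueClass a n = (vonMangoldt n : ℝ) :=
              Set.indicator_of_mem (s := {n : ℕ | (n : ZMod q) = a}) hc.2 _
            have hfpn : fp n = Real.log n / (n:ℝ) ^ x := by
              simp only [hfp, hc.1, if_true, hrc, vonMangoldt_apply_prime hc.1]
            have hgn : g n = 1 / (n:ℝ) := by simp only [hgdef]; rw [if_pos hc]
            rw [hfpn, hgn]
            have hlog : Real.log n ≤ (n:ℝ) ^ (x-1) / (x-1) :=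
              Real.log_natCast_le_rpow_div n hx1'
            have hxp : (0:ℝ) < (n:ℝ) ^ x := Real.rpow_pos_of_pos hn0 x
            have h1 : (n:ℝ) ^ (x-1) / (n:ℝ) ^ x = 1 / (n:ℝ) := by
              rw [Real.rpow_sub hn0, Real.rpow_one]
              field_simp
            calc Real.log n / (n:ℝ) ^ x ≤ ((n:ℝ) ^ (x-1) / (x-1)) / (n:ℝ) ^ x := by gcongr
              _ = ((n:ℝ) ^ (x-1) / (n:ℝ) ^ x) * (1/(x-1)) := by ring
              _ = (1/(n:ℝ)) * (1/(x-1)) := by rw [h1]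
              _ = 1/(x-1) * (1/(n:ℝ)) := by ring
          · have : fp n = 0 := by
              simp only [hfp]
              rcases Decidable.em n.Prime with hp | hp
              · have : residueClass a n = 0 :=
                  Set.indicator_of_notMem (s := {n : ℕ | (n : ZMod q) = a}) (fun h ↦ hc ⟨hp, h⟩) _
                simp [hp, this]
              · simp [hp]
            rw [this]
            exact mul_nonneg (by positivity) (hg0 _)
        calc ∑' k, fp (k + T) ≤ ∑' k, (1/(x-1)) * g (k + T) :=
              Summable.tsum_le_tsum hle ((summable_nat_add_iff T).2 Sfp) hgs
          _ = (1/(x-1)) * ∑' k, g (k + T) := tsum_mul_left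
          _ ≤ (1/(x-1)) * (ε/2) := by
              have h0 : (0:ℝ) ≤ 1/(x-1) := by positivity
              exact mul_le_mul_of_nonneg_left htail h0
          _ = (ε/2) / (x-1) := by ring
    calc ∑' n, residueClass a n / (n : ℝ) ^ x = (∑' n, fp n) + ∑' n, fnp n := hrw
      _ ≤ (D + (ε/2)/(x-1)) + B := add_le_add hfpD hfnpB
      _ = D + B + (ε/2)/(x-1) := by ring
  -- lower bound and contradiction
  obtain ⟨C, hC⟩ := LSeries_residueClass_lower_bound ha
  have main : ∀ x ∈ Set.Ioc (1:ℝ) 2, (ε/2) / (x-1) ≤ D + B + C := by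
    rintro x hx
    have h1 := hC hx
    have h2 := key x hx
    have : ε / (x-1) - C ≤ D + B + (ε/2)/(x-1) := le_trans h1 h2
    have hxx : ε / (x-1) = (ε/2)/(x-1) + (ε/2)/(x-1) := by ring
    linarith [this, hxx]
  set M : ℝ := max (D + B + C) 0 + 1 with hM
  have hMpos : 0 < M := by positivity
  set δ : ℝ := min 1 (ε / (4 * M)) with hδ
  have hδpos : 0 < δ := lt_min one_pos (by positivity)
  have hδ1 : δ ≤ 1 := min_le_left _ _
  have hx : (1 + δ) ∈ Set.Ioc (1:ℝ) 2 := ⟨by linarith, by linarith⟩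
  have h := main (1 + δ) hx
  rw [add_sub_cancel_left] at h
  have hδle : δ ≤ ε / (4 * M) := min_le_right _ _
  have h2 : (2:ℝ) * M ≤ (ε/2)/δ := by
    rw [le_div_iff₀ hδpos]
    calc 2 * M * δ ≤ 2 * M * (ε / (4*M)) := by gcongr
      _ = ε/2 := by field_simp; ring
  have h3 : D + B + C < M := by
    have := le_max_left (D + B + C) 0
    linarith
  linarith

lemma totient_prod_primes (S : Finset ℕ) (hS : ∀ p ∈ S, p.Prime) :
    (∏ p ∈ S, p).totient = ∏ p ∈ S, (p - 1) := by
  induction S using Finset.cons_induction with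
  | empty => simp
  | cons p S hp ih =>
    have hpprime : p.Prime := hS p (Finset.mem_cons_self p S)
    have hS' : ∀ q ∈ S, q.Prime := fun q hq ↦ hS q (Finset.mem_cons.mpr (Or.inr hq))
    have hcop : Nat.Coprime p (∏ q ∈ S, q) :=
      Nat.Coprime.prod_right fun q hq ↦
        (Nat.coprime_primes hpprime (hS' q hq)).mpr (fun h ↦ hp (h ▸ hq))
    rw [Finset.prod_cons, Finset.prod_cons, Nat.totient_mul hcop,
      Nat.totient_prime hpprime, ih hS']

lemma sieve_bound (S : Finset ℕ) (hS : ∀ p ∈ S, p.Prime) (N : ℕ) :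
    (((Finset.Icc 1 N).filter (fun n => ∀ p ∈ S, ¬ p ∣ n)).card : ℝ) ≤
      (∏ p ∈ S, (1 - 1/(p:ℝ))) * N + ∏ p ∈ S, (p:ℝ) := by
  set Q : ℕ := ∏ p ∈ S, p with hQdef
  have hQpos : 0 < Q := Finset.prod_pos fun p hp ↦ (hS p hp).pos
  -- counting step
  have step1 : ((Finset.Icc 1 N).filter (fun n => ∀ p ∈ S, ¬ p ∣ n)).card ≤
      Q.totient * (N / Q + 1) := by
    have : ((Finset.Icc 1 N).filter (fun n => ∀ p ∈ S, ¬ p ∣ n)).card ≤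
        (((range Q).filter (fun x => Q.Coprime x)) ×ˢ range (N / Q + 1)).card := by
      apply Finset.card_le_card_of_injOn (fun n ↦ (n % Q, n / Q))
      · intro n hn
        rw [Finset.mem_coe, Finset.mem_filter, Finset.mem_Icc] at hn
        obtain ⟨⟨hn1, hnN⟩, hdvd⟩ := hn
        have hcop : Nat.Coprime n Q :=
          Nat.Coprime.prod_right fun p hp ↦
            ((hS p hp).coprime_iff_not_dvd.mpr (hdvd p hp)).symm
        refine Finset.mem_product.mpr ⟨Finset.mem_filter.mpr ⟨Finset.mem_range.mpr
          (Nat.mod_lt _ hQpos), ?_⟩, Finset.mem_range.mpr ?_⟩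
        · have : Nat.gcd Q n = Nat.gcd (n % Q) Q := Nat.gcd_rec Q n
          unfold Nat.Coprime
          rw [Nat.gcd_comm, ← this, Nat.gcd_comm]
          exact hcop
        · exact Nat.lt_succ_of_le (Nat.div_le_div_right hnN)
      · intro n₁ h₁ n₂ h₂ h
        have e₁ := Nat.div_add_mod n₁ Q
        have e₂ := Nat.div_add_mod n₂ Q
        simp only [Prod.mk.injEq] at h
        calc n₁ = Q * (n₁ / Q) + n₁ % Q := e₁.symm
          _ = Q * (n₂ / Q) + n₂ % Q := by rw [h.1, h.2]
          _ = n₂ := e₂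
    calc _ ≤ _ := this
      _ = Q.totient * (N / Q + 1) := by
        rw [Finset.card_product, Finset.card_range, Nat.totient_eq_card_coprime]
  -- totient as a product
  have step2 : (Q.totient : ℝ) = (∏ p ∈ S, (1 - 1/(p:ℝ))) * Q := by
    rw [hQdef, totient_prod_primes S hS, Nat.cast_prod, Nat.cast_prod, ← Finset.prod_mul_distrib]
    refine Finset.prod_congr rfl fun p hp ↦ ?_
    have hp1 : 1 ≤ p := (hS p hp).one_lt.le
    have hp0 : (0:ℝ) < (p:ℝ) := by exact_mod_cast (hS p hp).pos
    rw [Nat.cast_sub hp1, Nat.cast_one]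
    field_simp
  have hprodQ : (∏ p ∈ S, (p:ℝ)) = (Q:ℝ) := by rw [hQdef, Nat.cast_prod]
  have hprod0 : (0:ℝ) ≤ ∏ p ∈ S, (1 - 1/(p:ℝ)) := by
    refine Finset.prod_nonneg fun p hp ↦ ?_
    have : (1:ℝ) ≤ (p:ℝ) := by exact_mod_cast (hS p hp).pos
    have : 1/(p:ℝ) ≤ 1 := by
      rw [div_le_one (by linarith)]; linarith
    linarith
  calc (((Finset.Icc 1 N).filter (fun n => ∀ p ∈ S, ¬ p ∣ n)).card : ℝ)
      ≤ (Q.totient : ℝ) * ((N / Q : ℕ) + 1) := by exact_mod_cast step1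
    _ = (Q.totient : ℝ) * (N / Q : ℕ) + Q.totient := by ring
    _ ≤ (Q.totient : ℝ) * ((N:ℝ) / (Q:ℝ)) + Q := by
        gcongr
        · exact Nat.cast_div_le
        · exact_mod_cast Nat.totient_le Q
    _ = (∏ p ∈ S, (1 - 1/(p:ℝ))) * Q * ((N:ℝ)/(Q:ℝ)) + Q := by rw [step2]
    _ = (∏ p ∈ S, (1 - 1/(p:ℝ))) * N + Q := by
        have hQ0 : (Q:ℝ) ≠ 0 := by positivity
        rw [mul_assoc, ← mul_div_assoc, mul_div_cancel_left₀ _ hQ0]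
    _ = (∏ p ∈ S, (1 - 1/(p:ℝ))) * N + ∏ p ∈ S, (p:ℝ) := by rw [hprodQ]

theorem density_zero_arith_prog (r m : ℕ) (hr : 0 < r) (hm : 0 < m)
    (hcop : Nat.Coprime r m) :
    Tendsto (fun N : ℕ =>
      (((Finset.Icc 1 N).filter (fun n => Squarefree n ∧
        ∀ p : ℕ, p.Prime → p % m = r % m → ¬ p ∣ n)).card : ℝ) / N)
      atTop (nhds 0) := by
  haveI : NeZero m := ⟨hm.ne'⟩
  have ha : IsUnit ((r : ZMod m)) := (ZMod.isUnit_iff_coprime r m).mpr hcop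
  have hns := aux_not_summable_one_div ha
  set g : ℕ → ℝ := fun n ↦ if n.Prime ∧ (n : ZMod m) = (r : ZMod m) then (1:ℝ)/n else 0
    with hgdef
  have hg0 : ∀ n, 0 ≤ g n := fun n ↦ by simp only [hgdef]; split <;> positivity
  have hdiv : Tendsto (fun n ↦ ∑ i ∈ range n, g i) atTop atTop := by
    by_contra hcon
    exact hns ((summable_iff_not_tendsto_nat_atTop_of_nonneg hg0).mpr hcon)
  have hexp : Tendsto (fun n ↦ Real.exp (-(∑ i ∈ range n, g i))) atTop (nhds 0) :=
    Real.tendsto_exp_atBot.comp (tendsto_neg_atTop_atBot.comp hdiv)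
  rw [NormedAddCommGroup.tendsto_nhds_zero]
  intro ε hε
  obtain ⟨n₀, hn₀⟩ :=
    (hexp.eventually (gt_mem_nhds (by positivity : (0:ℝ) < ε/2))).exists
  set S : Finset ℕ := (range n₀).filter
    (fun p ↦ p.Prime ∧ (p : ZMod m) = (r : ZMod m)) with hSdef
  have hSprime : ∀ p ∈ S, p.Prime := fun p hp ↦ (Finset.mem_filter.mp hp).2.1
  have hfac0 : ∀ p ∈ S, (0:ℝ) ≤ 1 - 1/(p:ℝ) := by
    intro p hp
    have h2 : (2:ℝ) ≤ (p:ℝ) := by exact_mod_cast (hSprime p hp).two_le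
    have : 1/(p:ℝ) ≤ 1 := by rw [div_le_one (by linarith)]; linarith
    linarith
  have hsum : ∑ p ∈ S, 1/(p:ℝ) = ∑ i ∈ range n₀, g i := by
    rw [hSdef, Finset.sum_filter]
  have hP : ∏ p ∈ S, (1 - 1/(p:ℝ)) < ε/2 := by
    have h1 : ∏ p ∈ S, (1 - 1/(p:ℝ)) ≤ ∏ p ∈ S, Real.exp (-(1/(p:ℝ))) := by
      refine Finset.prod_le_prod hfac0 fun p hp ↦ ?_
      have := Real.add_one_le_exp (-(1/(p:ℝ)))
      linarith
    have h2 : ∏ p ∈ S, Real.exp (-(1/(p:ℝ))) = Real.exp (-(∑ i ∈ range n₀, g i)) := by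
      rw [← Real.exp_sum, ← hsum, ← Finset.sum_neg_distrib]
    calc ∏ p ∈ S, (1 - 1/(p:ℝ)) ≤ Real.exp (-(∑ i ∈ range n₀, g i)) := h2 ▸ h1
      _ < ε/2 := hn₀
  set Q : ℝ := ∏ p ∈ S, (p:ℝ) with hQdef
  have hQ0 : 0 < Q := Finset.prod_pos fun p hp ↦ by exact_mod_cast (hSprime p hp).pos
  filter_upwards [eventually_ge_atTop 1,
    (tendsto_const_div_atTop_nhds_zero_nat Q).eventually
      (gt_mem_nhds (by positivity : (0:ℝ) < ε/2))] with N hN1 hN2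
  have hNpos : (0:ℝ) < (N:ℝ) := by exact_mod_cast hN1
  have hsubset : (Finset.Icc 1 N).filter (fun n => Squarefree n ∧
        ∀ p : ℕ, p.Prime → p % m = r % m → ¬ p ∣ n) ⊆
      (Finset.Icc 1 N).filter (fun n => ∀ p ∈ S, ¬ p ∣ n) := by
    intro n hn
    rw [Finset.mem_filter] at hn ⊢
    refine ⟨hn.1, fun p hp hdvd ↦ ?_⟩
    obtain ⟨-, hp1, hp2⟩ := Finset.mem_filter.mp hp
    exact hn.2.2 p hp1 ((ZMod.natCast_eq_natCast_iff' p r m).mp hp2) hdvd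
  have hcard : (((Finset.Icc 1 N).filter (fun n => Squarefree n ∧
        ∀ p : ℕ, p.Prime → p % m = r % m → ¬ p ∣ n)).card : ℝ) ≤
      (∏ p ∈ S, (1 - 1/(p:ℝ))) * N + Q := by
    refine le_trans ?_ (sieve_bound S hSprime N)
    exact_mod_cast Nat.cast_le.mpr (Finset.card_le_card hsubset)
  rw [Real.norm_eq_abs, abs_of_nonneg (by positivity)]
  have hfinal : (((Finset.Icc 1 N).filter (fun n => Squarefree n ∧
        ∀ p : ℕ, p.Prime → p % m = r % m → ¬ p ∣ n)).card : ℝ) / N ≤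
      (∏ p ∈ S, (1 - 1/(p:ℝ))) + Q / N := by
    rw [div_le_iff₀ hNpos, add_mul, div_mul_cancel₀ _ hNpos.ne']
    exact hcard
  have hprodlt := hP
  linarith
end
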